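/- arXiv:2501.06559 — 10 statements merged into one kernel-verified Lean document; each statement's English description precedes it below -/
import Mathlib

section
/- For a uniformly random permutation π of {1,...,m} conditioned on i_c preceding j_c, and four pairwise distinct indices i < j and k < l with neither (i,j) nor (k,l) equal to the constrained pair, if {i,j} and {k,l} are disjoint from each other and at least one of the two pairs is disjoint from {i_c, j_c}, then E[I_{ij}(π) I_{kl}(π)] = 0. -/
/-- The PWO factor: `1` if `i` precedes `j` in the permutation `π`, `-1` otherwise. -/
noncomputable def pwo {m : ℕ} (i j : Fin m) (π : Equiv.Perm (Fin m)) : ℝ :=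
  if π.symm i < π.symm j then 1 else -1

lemma pwo_swap_mul {m : ℕ} (a b i j : Fin m) (π : Equiv.Perm (Fin m)) :
    pwo i j (Equiv.swap a b * π) = if π.symm (Equiv.swap a b i) < π.symm (Equiv.swap a b j) then (1:ℝ) else -1 := by
  have h : ∀ x, (Equiv.swap a b * π).symm x = π.symm (Equiv.swap a b x) := by
    intro x
    simp [Equiv.Perm.mul_def, Equiv.symm_trans_apply]
  simp [pwo, h]

lemma aux_sum (m : ℕ) (ic jc i j k l : Fin m) (hij : i ≠ j)
    (h1 : i ≠ ic) (h2 : i ≠ jc) (h3 : j ≠ ic) (h4 : j ≠ jc)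
    (h5 : k ≠ i) (h6 : k ≠ j) (h7 : l ≠ i) (h8 : l ≠ j) :
    ∑ π ∈ Finset.univ.filter (fun π : Equiv.Perm (Fin m) => π.symm ic < π.symm jc),
      pwo i j π * pwo k l π = 0 := by
  have hs : ∀ (π : Equiv.Perm (Fin m)) x, (Equiv.swap i j * π).symm x = π.symm (Equiv.swap i j x) := by
    intro π x
    simp [Equiv.Perm.mul_def, Equiv.symm_trans_apply]
  apply Finset.sum_involution (fun π _ => Equiv.swap i j * π)
  · intro π hπ
    have hkk : pwo k l (Equiv.swap i j * π) = pwo k l π := by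
      rw [pwo_swap_mul, Equiv.swap_apply_of_ne_of_ne h5 h6,
        Equiv.swap_apply_of_ne_of_ne h7 h8, pwo]
    have hii : pwo i j (Equiv.swap i j * π) = - pwo i j π := by
      rw [pwo_swap_mul, Equiv.swap_apply_left, Equiv.swap_apply_right, pwo]
      have hne : π.symm i ≠ π.symm j := fun h => hij (π.symm.injective h)
      rcases lt_trichotomy (π.symm i) (π.symm j) with h | h | h
      · rw [if_pos h, if_neg (not_lt_of_gt h)]
      · exact absurd h hne
      · rw [if_neg (not_lt_of_gt h), if_pos h]; norm_num
    rw [hkk, hii]; ring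
  · intro π hπ _
    intro h
    have := congrArg (fun σ : Equiv.Perm (Fin m) => σ (π.symm i)) h
    simp only [Equiv.Perm.mul_apply, Equiv.apply_symm_apply, Equiv.swap_apply_left] at this
    exact hij this.symm
  · intro π hπ
    simp only [Finset.mem_filter, Finset.mem_univ, true_and] at hπ ⊢
    rw [hs, hs, Equiv.swap_apply_of_ne_of_ne (Ne.symm h1) (Ne.symm h3),
      Equiv.swap_apply_of_ne_of_ne (Ne.symm h2) (Ne.symm h4)]
    exact hπ
  · intro π hπ
    simp [← mul_assoc, Equiv.swap_mul_self]

/-- Under the uniform measure on permutations with `i_c` before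
`j_c`, for pairwise distinct `i < j`, `k < l`, neither pair equal to the
constrained pair, if at least one of the two pairs is disjoint from
`{i_c, j_c}` then `E[I_ij I_kl] = 0`. -/
theorem stmt7 (m : ℕ) (hm : 5 ≤ m) (ic jc : Fin m) (hc : ic ≠ jc)
    (i j k l : Fin m) (hij : i < j) (hkl : k < l)
    (hik : i ≠ k) (hil : i ≠ l) (hjk : j ≠ k) (hjl : j ≠ l)
    (hne1 : ¬((i = ic ∧ j = jc) ∨ (i = jc ∧ j = ic)))
    (hne2 : ¬((k = ic ∧ l = jc) ∨ (k = jc ∧ l = ic)))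
    (hdisj : (i ≠ ic ∧ i ≠ jc ∧ j ≠ ic ∧ j ≠ jc) ∨
             (k ≠ ic ∧ k ≠ jc ∧ l ≠ ic ∧ l ≠ jc)) :
    let S := Finset.univ.filter fun π : Equiv.Perm (Fin m) => π.symm ic < π.symm jc
    (∑ π ∈ S, pwo i j π * pwo k l π) / (S.card : ℝ) = 0 := by
  intro S
  have hsum : ∑ π ∈ S, pwo i j π * pwo k l π = 0 := by
    rcases hdisj with ⟨a1, a2, a3, a4⟩ | ⟨a1, a2, a3, a4⟩
    · exact aux_sum m ic jc i j k l hij.ne a1 a2 a3 a4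
        (Ne.symm hik) (Ne.symm hjk) (Ne.symm hil) (Ne.symm hjl)
    · have := aux_sum m ic jc k l i j hkl.ne a1 a2 a3 a4 hik hil hjk hjl
      rw [← this]
      exact Finset.sum_congr rfl fun π _ => mul_comm _ _
  rw [hsum, zero_div]
end

section
/- With V as the correlation-pattern matrix of PWO factors (V[{i,j},{i,k}] = V[{i,k},{j,k}] = 1, V[{i,j},{j,k}] = −1 for i<j<k, zero otherwise off-diagonal, and zero diagonal), the determinant of I + V/3 equals (m+1)^{m−1} / 3^{m(m−1)/2}. -/
/-!
Let `T` be the signed incidence matrix of the complete graph on `m` vertices, whose row for the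
edge `{i < j}` is `e_i - e_j`. Then `V = T Tᵀ - 2 I`, so `I + V / 3 = (I + T Tᵀ) / 3`, and by the
Weinstein–Aronszajn identity `det (I + T Tᵀ) = det (I + Tᵀ T)`. Now `Tᵀ T = m I - J` is the
Laplacian of the complete graph (`J` the all-ones matrix), and `(m + 1) I - J` has eigenvalue
`m + 1` with multiplicity `m - 1` and eigenvalue `1` on the constant vector.
-/

/-- Index type of the pairs `{i < j}` of components. -/
abbrev PairIdx (m : ℕ) := {p : Fin m × Fin m // p.1 < p.2}

/-- The PWO correlation-pattern matrix `V`. -/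
noncomputable def Vmat (m : ℕ) : Matrix (PairIdx m) (PairIdx m) ℝ := fun a b =>
  if a = b then 0
  else if a.1.1 = b.1.1 ∨ a.1.2 = b.1.2 then 1
  else if a.1.2 = b.1.1 ∨ a.1.1 = b.1.2 then -1
  else 0

open Matrix Finset

noncomputable def orientedIncidence (ι : Type*) [LinearOrder ι] :
    Matrix {p : ι × ι // p.1 < p.2} ι ℝ :=
  of fun a => Pi.single a.1.1 1 - Pi.single a.1.2 1

section CompleteGraph

variable {ι : Type*} [Fintype ι] [LinearOrder ι]

theorem two_nsmul_sum_filter_lt {M : Type*} [AddCommMonoid M] (F : ι × ι → M)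
    (hsymm : ∀ i j, F (j, i) = F (i, j)) (hdiag : ∀ i, F (i, i) = 0) :
    2 • ∑ p with p.1 < p.2, F p = ∑ p, F p := by
  have hswap : ∑ p with p.2 < p.1, F p = ∑ p with p.1 < p.2, F p :=
    Finset.sum_equiv (Equiv.prodComm ι ι) (by simp) fun p _ => (hsymm p.1 p.2).symm
  symm
  calc ∑ p, F p = ∑ p : ι × ι, ((if p.1 < p.2 then F p else 0) + if p.2 < p.1 then F p else 0) := by
        refine Finset.sum_congr rfl fun ⟨i, j⟩ _ => ?_
        rcases lt_trichotomy i j with h | rfl | h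
        · simp [h, h.not_gt]
        · simp [hdiag]
        · simp [h, h.not_gt]
    _ = 2 • ∑ p with p.1 < p.2, F p := by
        rw [Finset.sum_add_distrib, ← Finset.sum_filter, ← Finset.sum_filter, hswap, two_nsmul]

theorem card_pairs_lt : Fintype.card {p : ι × ι // p.1 < p.2} = (Fintype.card ι).choose 2 := by
  rw [Fintype.card_subtype, Fintype.card_product_filter_lt]

theorem transpose_orientedIncidence_mul :
    (orientedIncidence ι)ᵀ * orientedIncidence ι = (Fintype.card ι : ℝ) • 1 - of fun _ _ => 1 := by
  ext k l
  let F (p : ι × ι) : ℝ :=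
    (Pi.single p.1 1 - Pi.single p.2 1 : ι → ℝ) k * (Pi.single p.1 1 - Pi.single p.2 1 : ι → ℝ) l
  have hpairs : ((orientedIncidence ι)ᵀ * orientedIncidence ι) k l = ∑ p with p.1 < p.2, F p :=
    (Finset.sum_subtype _ (by simp) F).symm
  have hfull : ∑ p, F p = 2 * ((if k = l then (Fintype.card ι : ℝ) else 0) - 1) := by
    simp only [F, Fintype.sum_prod_type, mul_sub, sub_mul, Pi.sub_apply, Pi.single_apply]
    split_ifs with hkl <;> simp [hkl] <;> ring
  have hhalf := two_nsmul_sum_filter_lt F (fun i j => by simp only [F, Pi.sub_apply]; ring)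
    (fun i => by simp [F])
  rw [hpairs]
  simp only [Matrix.sub_apply, Matrix.smul_apply, one_apply, of_apply, smul_eq_mul, mul_ite, mul_one,
    mul_zero]
  rw [two_nsmul, hfull] at hhalf
  linarith

end CompleteGraph

theorem det_smul_one_sub_ones {n K : Type*} [Fintype n] [DecidableEq n] [Field K] {c : K}
    (hc : c ≠ 0) :
    (c • 1 - of fun _ _ => 1 : Matrix n n K).det = c ^ Fintype.card n * (1 - Fintype.card n / c) := by
  have : (c • 1 - of fun _ _ => 1 : Matrix n n K) =
      c • (1 - replicateCol Unit (fun _ : n => c⁻¹) * replicateRow Unit (fun _ : n => (1 : K))) := by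
    ext i j
    simp [Matrix.one_apply, replicateCol, replicateRow, mul_apply, mul_sub, hc]
  rw [this, det_smul, det_one_sub_mul_comm]
  simp [dotProduct, div_eq_mul_inv]

theorem orientedIncidence_mul_transpose (m : ℕ) :
    orientedIncidence (Fin m) * (orientedIncidence (Fin m))ᵀ = 2 • 1 + Vmat m := by
  ext ⟨⟨i, j⟩, hij⟩ ⟨⟨i', j'⟩, hij'⟩
  change (Pi.single i 1 - Pi.single j 1 : Fin m → ℝ) ⬝ᵥ (Pi.single i' 1 - Pi.single j' 1) = _
  simp only [sub_dotProduct, dotProduct_sub, single_dotProduct, Pi.single_apply, Vmat,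
    Matrix.add_apply, Matrix.smul_apply, one_apply, Subtype.mk.injEq, Prod.mk.injEq, Fin.ext_iff]
  have : (i : ℕ) < j := hij
  have : (i' : ℕ) < j' := hij'
  split_ifs <;> norm_num <;> omega

theorem stmt9_general (m : ℕ) :
    (1 + (3 : ℝ)⁻¹ • Vmat m).det
      = ((m : ℝ) + 1) ^ (m - 1) / 3 ^ (m * (m - 1) / 2) := by
  set T := orientedIncidence (Fin m)
  have hV : 1 + (3 : ℝ)⁻¹ • Vmat m = (3 : ℝ)⁻¹ • (1 + T * Tᵀ) := by
    rw [orientedIncidence_mul_transpose]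
    module
  have hL : 1 + Tᵀ * T = ((m : ℝ) + 1) • 1 - of fun _ _ => 1 := by
    rw [transpose_orientedIncidence_mul, Fintype.card_fin]
    module
  rw [hV, det_smul, det_one_add_mul_comm, hL, det_smul_one_sub_ones (by positivity),
    card_pairs_lt, Fintype.card_fin, Nat.choose_two_right, inv_pow, inv_mul_eq_div]
  congr 1
  cases m with
  | zero => simp
  | succ k =>
    rw [Nat.add_sub_cancel]
    field_simp
    push_cast
    ring

/-- `det(I + V/3) = (m+1)^(m-1) / 3^(m(m-1)/2)`. -/
theorem stmt9 (m : ℕ) (hm : 2 ≤ m) :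
    (1 + (3 : ℝ)⁻¹ • Vmat m).det
      = ((m : ℝ) + 1) ^ (m - 1) / 3 ^ (m * (m - 1) / 2) :=
  stmt9_general m
end

section
/- With V as the correlation-pattern matrix of PWO factors for m components, the trace of (I + V/3)^{-1} equals 3m(m−1)^2 / (2(m+1)). -/
/-!
With `N` the oriented incidence matrix of the complete graph `K_m` (vertices × edges), one has
`Nᵀ N = V + 2 I` and `N Nᵀ = m I - J`, where `J` is the all-ones matrix. Since the columns of `N`
sum to zero, `J N = 0`, so `(Nᵀ N)² = m Nᵀ N`, i.e. `V² = (m - 4) V + (2m - 4) I`. This quadratic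
relation gives `(I + V/3)⁻¹ = 3/(m+1) ((m - 1) I - V)`, and the trace follows from `tr V = 0` and
`#edges = m(m-1)/2`.
-/

open Matrix

theorem two_nsmul_sum_pairs_lt {α M : Type*} [Fintype α] [LinearOrder α] [AddCommMonoid M]
    (f : α → α → M) (hsymm : ∀ i j, f i j = f j i) (hdiag : ∀ i, f i i = 0) :
    2 • ∑ p : {p : α × α // p.1 < p.2}, f p.1.1 p.1.2 = ∑ i, ∑ j, f i j := by
  have hsub : ∑ p : {p : α × α // p.1 < p.2}, f p.1.1 p.1.2
      = ∑ i, ∑ j, if i < j then f i j else 0 := by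
    rw [← Finset.sum_subtype (Finset.univ.filter fun p : α × α => p.1 < p.2) (by simp)
      (fun p => f p.1 p.2), Finset.sum_filter, Fintype.sum_prod_type]
  have hsplit : ∀ i j, ((if i < j then f i j else 0) + if j < i then f j i else 0) = f i j := by
    intro i j
    rcases lt_trichotomy i j with h | rfl | h
    · simp [h, h.not_gt]
    · simp [hdiag]
    · simp [h, h.not_gt, hsymm]
  rw [two_nsmul, hsub]
  nth_rw 2 [Finset.sum_comm]
  simp only [← Finset.sum_add_distrib, hsplit]

noncomputable def orientedIncMatrix (m : ℕ) : Matrix (Fin m) (PairIdx m) ℝ :=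
  Matrix.of fun v e => (if v = e.1.2 then 1 else 0) - (if v = e.1.1 then 1 else 0)

theorem orientedIncMatrix_mul_transpose (m : ℕ) :
    orientedIncMatrix m * (orientedIncMatrix m)ᵀ = (m : ℝ) • 1 - Matrix.of fun _ _ => 1 := by
  ext u v
  -- Sum over all ordered pairs instead, where the indicator sums are immediate.
  let f (i j : Fin m) : ℝ :=
    ((if u = j then 1 else 0) - if u = i then 1 else 0) *
      ((if v = j then 1 else 0) - if v = i then 1 else 0)
  have hhalf := two_nsmul_sum_pairs_lt f (fun i j => by ring) (fun i => by simp [f])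
  have hfull : ∑ i, ∑ j, f i j = 2 * ((m : ℝ) * if u = v then 1 else 0) - 2 := by
    simp [f, mul_sub, Finset.sum_sub_distrib]
    split_ifs <;> ring
  rw [hfull, two_nsmul] at hhalf
  rw [mul_apply, Matrix.sub_apply, Matrix.smul_apply, one_apply, of_apply, smul_eq_mul]
  simp only [orientedIncMatrix, transpose_apply, of_apply]
  linarith

theorem sum_orientedIncMatrix_col (m : ℕ) (e : PairIdx m) :
    ∑ v, orientedIncMatrix m v e = 0 := by
  simp [orientedIncMatrix, Finset.sum_sub_distrib]

theorem orientedIncMatrix_transpose_mul (m : ℕ) :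
    (orientedIncMatrix m)ᵀ * orientedIncMatrix m = Vmat m + (2 : ℝ) • 1 := by
  ext ⟨⟨i, j⟩, hij⟩ ⟨⟨k, l⟩, hkl⟩
  simp only at hij hkl
  simp [mul_apply, orientedIncMatrix, mul_sub, Finset.sum_sub_distrib, Vmat, one_apply]
  grind

theorem orientedIncMatrix_mul_transpose_mul (m : ℕ) :
    orientedIncMatrix m * (orientedIncMatrix m)ᵀ * orientedIncMatrix m
      = (m : ℝ) • orientedIncMatrix m := by
  have hones : (Matrix.of fun _ _ => 1 : Matrix (Fin m) (Fin m) ℝ) * orientedIncMatrix m = 0 := by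
    ext v e
    simp [mul_apply, sum_orientedIncMatrix_col]
  rw [orientedIncMatrix_mul_transpose, Matrix.sub_mul, hones, sub_zero, smul_mul, Matrix.one_mul]

theorem Vmat_mul_self (m : ℕ) :
    Vmat m * Vmat m = ((m : ℝ) - 4) • Vmat m + (2 * (m : ℝ) - 4) • 1 := by
  set S := (orientedIncMatrix m)ᵀ * orientedIncMatrix m with hSdef
  have hV : Vmat m = S - (2 : ℝ) • 1 := by
    rw [hSdef, orientedIncMatrix_transpose_mul, add_sub_cancel_right]
  have hS : S * S = (m : ℝ) • S := by
    rw [hSdef, Matrix.mul_assoc, ← Matrix.mul_assoc (orientedIncMatrix m),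
      orientedIncMatrix_mul_transpose_mul, Matrix.mul_smul]
  rw [hV]
  simp only [Matrix.sub_mul, Matrix.mul_sub, hS, smul_mul, Matrix.mul_smul, Matrix.one_mul,
    Matrix.mul_one]
  module

theorem inv_one_add_inv_three_smul_Vmat (m : ℕ) :
    (1 + (3 : ℝ)⁻¹ • Vmat m)⁻¹ = (3 / ((m : ℝ) + 1)) • (((m : ℝ) - 1) • 1 - Vmat m) := by
  refine Matrix.inv_eq_right_inv ?_
  have hm : (m : ℝ) + 1 ≠ 0 := by positivity
  rw [Matrix.mul_smul, Matrix.mul_sub, Matrix.mul_smul, Matrix.mul_one, Matrix.add_mul, smul_mul,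
    Matrix.one_mul, Vmat_mul_self]
  match_scalars <;> field_simp <;> ring

theorem trace_Vmat (m : ℕ) : trace (Vmat m) = 0 := by
  simp [trace, Vmat]

theorem card_pairIdx (m : ℕ) : (Fintype.card (PairIdx m) : ℝ) = m * (m - 1) / 2 := by
  have h := trace_mul_comm (orientedIncMatrix m)ᵀ (orientedIncMatrix m)
  rw [orientedIncMatrix_transpose_mul, orientedIncMatrix_mul_transpose, trace_add, trace_Vmat,
    trace_sub, trace_smul, trace_smul, trace_one, trace_one] at h
  simp [trace] at h
  linarith

theorem stmt10_general (m : ℕ) :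
    Matrix.trace (1 + (3 : ℝ)⁻¹ • Vmat m)⁻¹
      = 3 * (m : ℝ) * ((m : ℝ) - 1) ^ 2 / (2 * ((m : ℝ) + 1)) := by
  rw [inv_one_add_inv_three_smul_Vmat, trace_smul, trace_sub, trace_smul, trace_one, trace_Vmat,
    card_pairIdx, smul_eq_mul, smul_eq_mul, sub_zero]
  field_simp

/-- `trace((I + V/3)⁻¹) = 3m(m-1)² / (2(m+1))`. -/
theorem stmt10 (m : ℕ) (hm : 3 ≤ m)
    (hinv : IsUnit (1 + (3 : ℝ)⁻¹ • Vmat m).det) :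
    Matrix.trace (1 + (3 : ℝ)⁻¹ • Vmat m)⁻¹
      = 3 * (m : ℝ) * ((m : ℝ) - 1) ^ 2 / (2 * ((m : ℝ) + 1)) :=
  stmt10_general m
end

section
/- Under the PWGCO model with groups G_1,...,G_{n_G}, the D-criterion value of the uniform measure ξ_0 on the feasible permutation set equals det(M(ξ_0)) = ∏_{g=1}^{n_G} (|G_g|+1)^{|G_g|−1} / 3^{|G_g|(|G_g|−1)/2}, where M(ξ_0) = diag(1, I_1+V_1/3, ..., I_{n_G}+V_{n_G}/3) is block diagonal with one block per group. -/
/-!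
Within one group of size `k`, index the pairs `i < j` by the columns `e_i - e_j` of the signed
incidence matrix `C` of the complete graph on the group. Then `Cᵀ C = V + 2 I`, so
`I + V / 3 = (I + Cᵀ C) / 3`, and by Sylvester's identity `det (I + Cᵀ C) = det (I + C Cᵀ)`, where
`C Cᵀ = k I - J` is the Laplacian of the complete graph; `det ((k + 1) I - J) = (k + 1) ^ (k - 1)`.
Since the groups are disjoint, reindexing the pairs by their group makes `M(ξ₀)` block diagonal.
-/

/-- Index type of the within-group pairs `{i < j}` (both components in a common group). -/
abbrev GPair {m n : ℕ} (G : Fin n → Finset (Fin m)) :=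
  {p : Fin m × Fin m // p.1 < p.2 ∧ ∃ g, p.1 ∈ G g ∧ p.2 ∈ G g}

/-- The moment matrix `M(ξ₀) = diag(1, I₁+V₁/3, …, I_{n_G}+V_{n_G}/3)` of the
uniform measure under the PWGCO model: leading `1×1` block `1`, zero
constant-row/column, and within the pair block the standard PWO pattern (which
is block diagonal across groups since disjoint groups share no component). -/
noncomputable def Mmom {m n : ℕ} (G : Fin n → Finset (Fin m)) :
    Matrix (Unit ⊕ GPair G) (Unit ⊕ GPair G) ℝ := fun a b =>
  match a, b with
  | Sum.inl _, Sum.inl _ => 1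
  | Sum.inl _, Sum.inr _ => 0
  | Sum.inr _, Sum.inl _ => 0
  | Sum.inr p, Sum.inr q =>
      if p = q then 1
      else if p.1.1 = q.1.1 ∨ p.1.2 = q.1.2 then 1 / 3
      else if p.1.2 = q.1.1 ∨ p.1.1 = q.1.2 then -(1 / 3)
      else 0

open Finset Matrix Function

theorem Matrix.det_blockDiagonal' {R o : Type*} [CommRing R] [Fintype o] [DecidableEq o]
    {m' : o → Type*} [∀ i, Fintype (m' i)] [∀ i, DecidableEq (m' i)]
    (d : ∀ i, Matrix (m' i) (m' i) R) :
    (blockDiagonal' d).det = ∏ i, (d i).det := by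
  let _ : LinearOrder o := LinearOrder.lift' _ (Fintype.equivFin o).injective
  rw [(blockTriangular_blockDiagonal' d).det_fintype]
  refine prod_congr rfl fun i _ => ?_
  rw [← det_submatrix_equiv_self (Equiv.sigmaSubtype i).symm]
  congr 1
  ext x y
  exact blockDiagonal'_apply_eq d i x y

theorem det_card_add_one_smul_one_sub_allOnes (ι : Type*) [Fintype ι] [DecidableEq ι] :
    det (((Fintype.card ι : ℝ) + 1) • 1 - of fun _ _ : ι => (1 : ℝ))
      = ((Fintype.card ι : ℝ) + 1) ^ (Fintype.card ι - 1) := by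
  have hk : (Fintype.card ι : ℝ) + 1 ≠ 0 := by positivity
  have hfactor : ((Fintype.card ι : ℝ) + 1) • 1 - of (fun _ _ : ι => (1 : ℝ))
      = ((Fintype.card ι : ℝ) + 1) •
          (1 + replicateCol Unit (fun _ : ι => -((Fintype.card ι : ℝ) + 1)⁻¹)
            * replicateRow Unit (fun _ : ι => (1 : ℝ))) := by
    ext x y
    simp [one_apply, mul_apply]
    split_ifs <;> field_simp <;> ring
  rw [hfactor, det_smul, det_one_add_replicateCol_mul_replicateRow]
  simp only [dotProduct, one_mul, sum_const, card_univ, nsmul_eq_mul]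
  generalize Fintype.card ι = k at hk ⊢
  rcases k with _ | k
  · simp
  · rw [Nat.add_sub_cancel, pow_succ]
    field_simp
    ring

abbrev LtPair (ι : Type*) [LinearOrder ι] := {p : ι × ι // p.1 < p.2}

theorem sum_sum_eq_two_nsmul_sum_ltPair_add_sum_diag {ι : Type*} [LinearOrder ι] [Fintype ι]
    {M : Type*} [AddCommMonoid M] (f : ι → ι → M) (hf : ∀ a b, f a b = f b a) :
    ∑ a, ∑ b, f a b = 2 • ∑ p : LtPair ι, f p.1.1 p.1.2 + ∑ a, f a a := by
  have hlt : ∑ p : LtPair ι, f p.1.1 p.1.2 = ∑ a, ∑ b, if a < b then f a b else 0 := by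
    rw [← Fintype.sum_prod_type', ← sum_filter]
    exact (sum_subtype _ (by simp) (fun p : ι × ι => f p.1 p.2)).symm
  have hgt : ∑ a, ∑ b, (if b < a then f a b else 0) = ∑ a, ∑ b, if a < b then f a b else 0 := by
    rw [sum_comm]
    simp_rw [hf]
  have htri : ∀ a b, f a b = (if a < b then f a b else 0) + (if b < a then f a b else 0)
      + if a = b then f a b else 0 := by
    intro a b
    rcases lt_trichotomy a b with h | rfl | h
    · simp [h, h.not_gt, h.ne]
    · simp
    · simp [h, h.not_gt, h.ne']
  conv_lhs => enter [2, a, 2, b]; rw [htri a b]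
  simp only [sum_add_distrib, hgt, ← hlt, two_nsmul, sum_ite_eq, mem_univ, if_true]

section LtPair

variable (ι : Type*) [LinearOrder ι]

/-- The PWO correlation pattern `V` on the pairs `i < j` of `ι`. -/
def pwoPattern : Matrix (LtPair ι) (LtPair ι) ℝ := fun p q =>
  if p = q then 0
  else if p.1.1 = q.1.1 ∨ p.1.2 = q.1.2 then 1
  else if p.1.2 = q.1.1 ∨ p.1.1 = q.1.2 then -1
  else 0

/-- The signed vertex–edge incidence matrix of the complete graph on `ι`. -/
def incidence : Matrix ι (LtPair ι) ℝ :=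
  of fun i p => (if i = p.1.1 then 1 else 0) - if i = p.1.2 then 1 else 0

variable [Fintype ι]

theorem card_ltPair :
    Fintype.card (LtPair ι) = Fintype.card ι * (Fintype.card ι - 1) / 2 := by
  rw [Fintype.card_subtype, Fintype.card_product_filter_lt, Nat.choose_two_right]

theorem transpose_incidence_mul_incidence :
    (incidence ι)ᵀ * incidence ι = pwoPattern ι + 2 := by
  ext ⟨⟨a, b⟩, hab⟩ ⟨⟨c, d⟩, hcd⟩
  simp only [mul_apply, transpose_apply, incidence, of_apply, sub_mul, mul_sub, ite_mul, one_mul,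
    zero_mul, sum_sub_distrib, sum_ite_eq', mem_univ, if_true, pwoPattern, Matrix.add_apply,
    ofNat_apply, Subtype.mk.injEq, Prod.mk.injEq]
  split_ifs <;> grind

theorem incidence_mul_transpose_incidence :
    incidence ι * (incidence ι)ᵀ = (Fintype.card ι : ℝ) • 1 - of fun _ _ => 1 := by
  ext x y
  set f : ι → ι → ℝ := fun a b =>
    ((if x = a then 1 else 0) - if x = b then 1 else 0) *
      ((if y = a then 1 else 0) - if y = b then 1 else 0)
  have hentry : (incidence ι * (incidence ι)ᵀ) x y = ∑ p : LtPair ι, f p.1.1 p.1.2 := rfl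
  have hfull : ∑ a, ∑ b, f a b = 2 * ((if x = y then (Fintype.card ι : ℝ) else 0) - 1) := by
    by_cases hxy : x = y
    · subst hxy
      simp [f, mul_sub, sum_sub_distrib]
      ring
    · simp [f, mul_sub, sum_sub_distrib, hxy]
      norm_num
  have hsum := sum_sum_eq_two_nsmul_sum_ltPair_add_sum_diag f (fun a b => by simp only [f]; ring)
  simp only [hfull, f, sub_self, zero_mul, sum_const_zero, add_zero, ← hentry, two_nsmul] at hsum
  simp only [Matrix.sub_apply, Matrix.smul_apply, one_apply, of_apply, smul_eq_mul, mul_ite,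
    mul_one, mul_zero]
  linarith

theorem det_one_add_inv_three_smul_pwoPattern :
    det (1 + (3⁻¹ : ℝ) • pwoPattern ι)
      = ((Fintype.card ι : ℝ) + 1) ^ (Fintype.card ι - 1)
          / 3 ^ (Fintype.card ι * (Fintype.card ι - 1) / 2) := by
  have hV : 1 + (3⁻¹ : ℝ) • pwoPattern ι = (3⁻¹ : ℝ) • (1 + (incidence ι)ᵀ * incidence ι) := by
    rw [transpose_incidence_mul_incidence,
      show (2 : Matrix (LtPair ι) (LtPair ι) ℝ) = (2 : ℝ) • 1 by simp [two_smul, one_add_one_eq_two]]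
    module
  have hL : 1 + ((Fintype.card ι : ℝ) • 1 - of fun _ _ : ι => (1 : ℝ))
      = ((Fintype.card ι : ℝ) + 1) • 1 - of fun _ _ => 1 := by
    module
  rw [hV, det_smul, card_ltPair, det_one_add_mul_comm, incidence_mul_transpose_incidence, hL,
    det_card_add_one_smul_one_sub_allOnes, inv_pow, inv_mul_eq_div]

end LtPair

section PWGCO

variable {m n : ℕ} (G : Fin n → Finset (Fin m))

def GPair.ofSigma : (Σ g, LtPair (G g)) → GPair G := fun x =>
  ⟨(x.2.1.1, x.2.1.2), x.2.2, x.1, x.2.1.1.2, x.2.1.2.2⟩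

variable {G}

theorem GPair.ofSigma_bijective (hdisj : ∀ g h : Fin n, g ≠ h → Disjoint (G g) (G h)) :
    Bijective (GPair.ofSigma G) := by
  refine ⟨?_, fun ⟨⟨a, b⟩, hab, g, ha, hb⟩ => ⟨⟨g, (⟨a, ha⟩, ⟨b, hb⟩), hab⟩, rfl⟩⟩
  rintro ⟨g, ⟨a, b⟩, hab⟩ ⟨h, ⟨c, d⟩, hcd⟩ heq
  simp only [GPair.ofSigma, Subtype.mk.injEq, Prod.mk.injEq] at heq
  obtain rfl : g = h := by
    by_contra hgh
    exact disjoint_left.mp (hdisj g h hgh) a.2 (heq.1 ▸ c.2)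
  obtain ⟨rfl, rfl⟩ : a = c ∧ b = d := ⟨Subtype.ext heq.1, Subtype.ext heq.2⟩
  rfl

theorem Mmom_submatrix_ofSigma (hdisj : ∀ g h : Fin n, g ≠ h → Disjoint (G g) (G h)) :
    (Mmom G).submatrix (Sum.map id (GPair.ofSigma G)) (Sum.map id (GPair.ofSigma G))
      = fromBlocks 1 0 0 (blockDiagonal' fun g => 1 + (3⁻¹ : ℝ) • pwoPattern (G g)) := by
  ext (_ | ⟨g, ⟨a, b⟩, hab⟩) (_ | ⟨h, ⟨c, d⟩, hcd⟩)
  · rfl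
  · rfl
  · rfl
  simp only [submatrix_apply, Sum.map_inr, fromBlocks_apply₂₂]
  by_cases hgh : g = h
  · subst hgh
    rw [blockDiagonal'_apply_eq]
    simp only [Mmom, GPair.ofSigma, Subtype.mk.injEq, Prod.mk.injEq, Subtype.coe_inj, pwoPattern,
      Matrix.add_apply, Matrix.smul_apply, one_apply, smul_eq_mul]
    split_ifs <;> norm_num
  · rw [blockDiagonal'_apply_ne _ _ _ hgh]
    have hne : ∀ u ∈ G g, ∀ v ∈ G h, u ≠ v := fun u hu v hv huv =>
      disjoint_left.mp (hdisj g h hgh) hu (huv ▸ hv)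
    simp only [Mmom, GPair.ofSigma, Subtype.mk.injEq, Prod.mk.injEq, hne _ a.2 _ c.2,
      hne _ a.2 _ d.2, hne _ b.2 _ c.2, hne _ b.2 _ d.2, false_and, or_self, if_false]

end PWGCO

theorem stmt11_general (m n : ℕ) (G : Fin n → Finset (Fin m))
    (hdisj : ∀ g h : Fin n, g ≠ h → Disjoint (G g) (G h)) :
    (Mmom G).det
      = ∏ g, ((G g).card + 1 : ℝ) ^ ((G g).card - 1)
          / 3 ^ ((G g).card * ((G g).card - 1) / 2) := by
  calc (Mmom G).det
      = ((Mmom G).submatrix (Sum.map id (GPair.ofSigma G)) (Sum.map id (GPair.ofSigma G))).det :=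
        (det_submatrix_equiv_self
          ((Equiv.refl Unit).sumCongr (Equiv.ofBijective _ (GPair.ofSigma_bijective hdisj))) _).symm
    _ = ∏ g, det (1 + (3⁻¹ : ℝ) • pwoPattern (G g)) := by
        rw [Mmom_submatrix_ofSigma hdisj, det_fromBlocks_zero₂₁, det_one, one_mul,
          det_blockDiagonal']
    _ = _ := prod_congr rfl fun g _ => by
        rw [← Fintype.card_coe]
        -- `convert` reconciles two `DecidableEq` instances on the pairs of `G g`.
        convert det_one_add_inv_three_smul_pwoPattern (G g)

/-- the D-criterion value of the uniform measure under the PWGCO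
model: `det M(ξ₀) = ∏_g (|G_g|+1)^{|G_g|-1} / 3^{|G_g|(|G_g|-1)/2}`. -/
theorem stmt11 (m n : ℕ) (G : Fin n → Finset (Fin m))
    (hdisj : ∀ g h : Fin n, g ≠ h → Disjoint (G g) (G h))
    (hcover : ∀ x : Fin m, ∃ g, x ∈ G g)
    (hne : ∀ g, (G g).Nonempty) :
    (Mmom G).det
      = ∏ g, ((G g).card + 1 : ℝ) ^ ((G g).card - 1)
          / 3 ^ ((G g).card * ((G g).card - 1) / 2) :=
  stmt11_general m n G hdisj
end

section
/- Under the PWGCO model, the trace of the inverse of the block-diagonal moment matrix M(ξ_0) = diag(1, I_1+V_1/3, ..., I_{n_G}+V_{n_G}/3) equals 1 + ∑_{g=1}^{n_G} 3|G_g|(|G_g|−1)^2 / (2(|G_g|+1)). -/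
/-! The pair block of `M(ξ₀)` is `(1 + D) / 3`, where `D = U Uᵀ` is the Gram matrix of the vectors
`e_i - e_j` attached to the within-group pairs `i < j`. The matrix `UᵀU` is the Laplacian
`diag(|G_g|) - J` of the disjoint union of the complete graphs on the groups, and each row of `U`
is orthogonal to the indicator of every group, so `D² = U (UᵀU) Uᵀ = diag(|G_g|) D`. Hence
`(1 + D)⁻¹ = 1 - diag(1 / (|G_g| + 1)) D`, whose diagonal entry at a pair of group `g` is
`1 - 2 / (|G_g| + 1)`; group `g` contributes `|G_g| (|G_g| - 1) / 2` such pairs. -/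

open Matrix Finset

section RelDegree

variable {α : Type*} [Fintype α] (r : α → α → Prop) [DecidableRel r]

def relDegree (a : α) : ℕ := #{b | r a b}

def relMatrix : Matrix α α ℝ := Matrix.of fun a b => if r a b then 1 else 0

variable {r}

theorem relDegree_eq_of_rel [Std.Symm r] [IsTrans α r] {a b : α} (h : r a b) :
    relDegree r a = relDegree r b := by
  simp_rw [relDegree, rel_congr_left h]

end RelDegree

section RelPair

variable {α : Type*} [LinearOrder α] (r : α → α → Prop)

abbrev RelPair := {p : α × α // p.1 < p.2 ∧ r p.1 p.2}

def pairIncidence : Matrix (RelPair r) α ℝ :=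
  Matrix.of fun p => Pi.single p.1.1 1 - Pi.single p.1.2 1

def pairGram [Fintype α] : Matrix (RelPair r) (RelPair r) ℝ := pairIncidence r * (pairIncidence r)ᵀ

variable {r}

theorem pairIncidence_apply (p : RelPair r) (a : α) :
    pairIncidence r p a = (if a = p.1.1 then 1 else 0) - (if a = p.1.2 then 1 else 0) := by
  simp [pairIncidence, Pi.single_apply]

variable [Fintype α]

theorem pairGram_apply (p q : RelPair r) :
    pairGram r p q
      = (if p.1.1 = q.1.1 then 1 else 0) - (if p.1.1 = q.1.2 then 1 else 0)
        - (if p.1.2 = q.1.1 then 1 else 0) + (if p.1.2 = q.1.2 then 1 else 0) := by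
  simp only [pairGram, mul_apply, transpose_apply, pairIncidence_apply, sub_mul, mul_sub, ite_mul,
    one_mul, zero_mul, Finset.sum_sub_distrib, Finset.sum_ite_eq', Finset.mem_univ, if_true]
  ring

theorem pairGram_apply_self (p : RelPair r) : pairGram r p p = 2 := by
  norm_num [pairGram_apply, p.2.1.ne, p.2.1.ne']

variable [DecidableRel r] [Std.Symm r]

theorem sum_relPair_eq_half (f : α → α → ℝ)
    (hf : ∀ a b, r a b → f a b = f b a) (hf0 : ∀ a, f a a = 0) :
    ∑ p : RelPair r, f p.1.1 p.1.2 = (∑ a, ∑ b, if r a b then f a b else 0) / 2 := by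
  have hsplit : ∀ a b, (if r a b then f a b else 0)
      = (if a < b ∧ r a b then f a b else 0) + (if b < a ∧ r b a then f b a else 0) := by
    intro a b
    rcases lt_trichotomy a b with h | rfl | h
    · simp [h, h.not_gt]
    · simp [hf0]
    · by_cases hab : r a b
      · simp [h, h.not_gt, hab, symm_of r hab, hf a b hab]
      · simp [h.not_gt, hab, mt (symm_of r) hab]
  have hlt : ∑ p : RelPair r, f p.1.1 p.1.2 = ∑ a, ∑ b, if a < b ∧ r a b then f a b else 0 := by
    rw [← Finset.sum_subtype {p : α × α | p.1 < p.2 ∧ r p.1 p.2} (by simp)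
      (fun p : α × α => f p.1 p.2), Finset.sum_filter, Fintype.sum_prod_type]
  simp_rw [hsplit, Finset.sum_add_distrib]
  rw [Finset.sum_comm (f := fun a b => if b < a ∧ r b a then f b a else 0), hlt]
  ring

theorem transpose_mul_pairIncidence :
    (pairIncidence r)ᵀ * pairIncidence r
      = diagonal (fun a => (relDegree r a : ℝ)) - relMatrix r := by
  ext x y
  rw [mul_apply]
  simp only [transpose_apply, pairIncidence_apply]
  rw [sum_relPair_eq_half (fun a b => ((if x = a then 1 else 0) - (if x = b then 1 else 0)) *
    ((if y = a then 1 else 0) - (if y = b then 1 else 0))) (fun a b _ => by ring) (fun a => by simp)]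
  have hterm : ∀ a b, (if r a b then ((if x = a then (1 : ℝ) else 0) - (if x = b then 1 else 0)) *
      ((if y = a then 1 else 0) - (if y = b then 1 else 0)) else 0)
      = (if a = x ∧ a = y ∧ r a b then 1 else 0) - (if a = x ∧ b = y ∧ r a b then 1 else 0)
        - (if b = x ∧ a = y ∧ r a b then 1 else 0) + (if b = x ∧ b = y ∧ r a b then 1 else 0) := by
    intro a b
    split_ifs <;> grind
  simp only [hterm, Finset.sum_add_distrib, Finset.sum_sub_distrib]
  simp [relMatrix, relDegree, diagonal_apply, Finset.sum_ite_eq', ite_and,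
    comm_of r (b := x)]
  split_ifs <;> ring

variable [IsTrans α r]

theorem pairIncidence_mul_relMatrix : pairIncidence r * relMatrix r = 0 := by
  ext p c
  simp only [mul_apply, pairIncidence_apply, relMatrix, of_apply, sub_mul, ite_mul, one_mul,
    zero_mul, Finset.sum_sub_distrib, Finset.sum_ite_eq', Finset.mem_univ, if_true,
    rel_congr_left p.2.2, sub_self, Matrix.zero_apply]

theorem diagonal_mul_pairIncidence (φ : ℕ → ℝ) :
    diagonal (fun p : RelPair r => φ (relDegree r p.1.1)) * pairIncidence r
      = pairIncidence r * diagonal (fun a => φ (relDegree r a)) := by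
  ext p c
  rw [diagonal_mul, mul_diagonal, pairIncidence_apply]
  split_ifs with h₁ h₂ h₂ <;> simp [h₁, h₂, relDegree_eq_of_rel p.2.2]

theorem pairGram_mul_self :
    pairGram r * pairGram r = diagonal (fun p : RelPair r => (relDegree r p.1.1 : ℝ)) * pairGram r :=
  calc _ = pairIncidence r * ((pairIncidence r)ᵀ * pairIncidence r) * (pairIncidence r)ᵀ := by
        simp only [pairGram, Matrix.mul_assoc]
    _ = pairIncidence r * diagonal (fun a => (relDegree r a : ℝ)) * (pairIncidence r)ᵀ := by
        rw [transpose_mul_pairIncidence, Matrix.mul_sub, pairIncidence_mul_relMatrix, sub_zero]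
    _ = _ := by
        rw [← diagonal_mul_pairIncidence (fun k => (k : ℝ)), pairGram, Matrix.mul_assoc]

theorem one_sub_mul_one_add_pairGram :
    (1 - diagonal (fun p : RelPair r => ((relDegree r p.1.1 : ℝ) + 1)⁻¹) * pairGram r)
      * (1 + pairGram r) = 1 := by
  set C := diagonal (fun p : RelPair r => ((relDegree r p.1.1 : ℝ) + 1)⁻¹)
  have hC : C + C * diagonal (fun p : RelPair r => (relDegree r p.1.1 : ℝ)) = 1 := by
    rw [diagonal_mul_diagonal, diagonal_add, ← diagonal_one]
    congr 1
    ext p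
    field_simp
    ring
  calc (1 - C * pairGram r) * (1 + pairGram r)
        = 1 + pairGram r - C * pairGram r - C * (pairGram r * pairGram r) := by noncomm_ring
    _ = 1 + pairGram r - (C + C * diagonal (fun p => (relDegree r p.1.1 : ℝ))) * pairGram r := by
        rw [pairGram_mul_self, Matrix.add_mul, Matrix.mul_assoc]
        abel
    _ = 1 := by rw [hC, Matrix.one_mul, add_sub_cancel_right]

theorem sum_relPair_relDegree (φ : ℕ → ℝ) :
    ∑ p : RelPair r, φ (relDegree r p.1.1)
      = (∑ a, ((relDegree r a : ℝ) - if r a a then 1 else 0) * φ (relDegree r a)) / 2 := by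
  have hoff : ∀ p : RelPair r, φ (relDegree r p.1.1)
      = if p.1.1 = p.1.2 then 0 else φ (relDegree r p.1.1) := fun p => (if_neg p.2.1.ne).symm
  rw [Finset.sum_congr rfl fun p _ => hoff p]
  refine (sum_relPair_eq_half (fun a b => if a = b then 0 else φ (relDegree r a))
    (fun a b h => by simp [eq_comm, relDegree_eq_of_rel h]) (fun a => by simp)).trans ?_
  congr 1
  refine Finset.sum_congr rfl fun a _ => ?_
  have h : ∀ b, (if r a b then (if a = b then 0 else φ (relDegree r a)) else 0)
      = (if r a b then φ (relDegree r a) else 0)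
        - if b = a then (if r a a then φ (relDegree r a) else 0) else 0 := by
    intro b
    by_cases hb : b = a
    · subst hb; split_ifs <;> simp
    · simp [hb, Ne.symm hb]
  simp only [h, Finset.sum_sub_distrib, Finset.sum_ite_eq', Finset.mem_univ, if_true]
  split_ifs <;> simp [relDegree, Finset.sum_ite, sub_mul]

end RelPair

section Groups

variable {m n : ℕ} (G : Fin n → Finset (Fin m))

abbrev SameGroup (a b : Fin m) : Prop := ∃ g, a ∈ G g ∧ b ∈ G g

instance : Std.Symm (SameGroup G) := ⟨fun _ _ ⟨g, ha, hb⟩ => ⟨g, hb, ha⟩⟩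

theorem Mmom_eq_fromBlocks : Mmom G = fromBlocks 1 0 0 ((3 : ℝ)⁻¹ • (1 + pairGram (SameGroup G))) := by
  ext (a | p) (b | q)
  · rfl
  · rfl
  · rfl
  · have hp := p.2.1
    have hq := q.2.1
    change (if p = q then (1 : ℝ) else if p.1.1 = q.1.1 ∨ p.1.2 = q.1.2 then 1 / 3
      else if p.1.2 = q.1.1 ∨ p.1.1 = q.1.2 then -(1 / 3) else 0)
      = 3⁻¹ * ((if p = q then 1 else 0) + pairGram (SameGroup G) p q)
    rw [pairGram_apply (r := SameGroup G) p q]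
    simp only [Subtype.ext_iff, Prod.ext_iff, Fin.ext_iff]
    rw [Fin.lt_def] at hp hq
    split_ifs <;> first | omega | norm_num

variable {G} (hdisj : ∀ g h : Fin n, g ≠ h → Disjoint (G g) (G h))
include hdisj

theorem eq_of_mem_of_mem_of_disjoint {a : Fin m} {g g' : Fin n} (h : a ∈ G g) (h' : a ∈ G g') :
    g = g' :=
  by_contra fun hne => Finset.disjoint_left.mp (hdisj g g' hne) h h'

theorem isTrans_sameGroup : IsTrans (Fin m) (SameGroup G) :=
  ⟨fun _ _ _ ⟨g, ha, hb⟩ ⟨_, hb', hc⟩ => ⟨g, ha, eq_of_mem_of_mem_of_disjoint hdisj hb hb' ▸ hc⟩⟩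

theorem relDegree_sameGroup {a : Fin m} {g : Fin n} (ha : a ∈ G g) :
    relDegree (SameGroup G) a = #(G g) := by
  unfold relDegree
  congr 1
  ext b
  simp only [Finset.mem_filter, Finset.mem_univ, true_and]
  exact ⟨fun ⟨g', ha', hb⟩ => eq_of_mem_of_mem_of_disjoint hdisj ha ha' ▸ hb,
    fun hb => ⟨g, ha, hb⟩⟩

theorem sum_eq_sum_groups (F : Fin m → ℝ) (hF : ∀ a, (∀ g, a ∉ G g) → F a = 0) :
    ∑ a, F a = ∑ g, ∑ a ∈ G g, F a := by
  rw [← Finset.sum_biUnion fun g _ g' _ hne => hdisj g g' hne]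
  exact (Finset.sum_subset (Finset.subset_univ _) fun a _ ha => hF a (by simpa using ha)).symm

theorem sum_gPair_relDegree (φ : ℕ → ℝ) :
    ∑ p : GPair G, φ (relDegree (SameGroup G) p.1.1)
      = ∑ g, (#(G g) : ℝ) * (#(G g) - 1) * φ #(G g) / 2 := by
  have := isTrans_sameGroup hdisj
  refine (sum_relPair_relDegree (r := SameGroup G) φ).trans ?_
  rw [sum_eq_sum_groups hdisj, Finset.sum_div]
  · refine Finset.sum_congr rfl fun g _ => ?_
    rw [Finset.sum_congr rfl fun a ha => by rw [relDegree_sameGroup hdisj ha, if_pos ⟨g, ha, ha⟩],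
      Finset.sum_const, nsmul_eq_mul, mul_assoc]
  · intro a ha
    have hdeg : relDegree (SameGroup G) a = 0 := by simp [relDegree, ha]
    simp [hdeg, ha]

theorem trace_Mmom_inv :
    trace (Mmom G)⁻¹
      = 1 + 3 * ∑ p : GPair G, (1 - 2 / ((relDegree (SameGroup G) p.1.1 : ℝ) + 1)) := by
  have := isTrans_sameGroup hdisj
  set C := diagonal fun p : RelPair (SameGroup G) => ((relDegree (SameGroup G) p.1.1 : ℝ) + 1)⁻¹
  have hinv : (Mmom G)⁻¹ = fromBlocks 1 0 0 ((3 : ℝ) • (1 - C * pairGram (SameGroup G))) := by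
    refine inv_eq_left_inv ?_
    rw [Mmom_eq_fromBlocks, fromBlocks_multiply, smul_mul_smul_comm, one_sub_mul_one_add_pairGram]
    simp [← fromBlocks_one]
  rw [hinv]
  simp only [trace, diag_apply, Fintype.sum_sum_type, fromBlocks_apply₁₁, fromBlocks_apply₂₂,
    Matrix.smul_apply, Matrix.sub_apply, diagonal_mul, C, pairGram_apply_self, one_apply_eq,
    smul_eq_mul, Finset.mul_sum]
  simp [div_eq_inv_mul]

end Groups

theorem stmt12_general (m n : ℕ) (G : Fin n → Finset (Fin m))
    (hdisj : ∀ g h : Fin n, g ≠ h → Disjoint (G g) (G h)) :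
    Matrix.trace (Mmom G)⁻¹
      = 1 + ∑ g, 3 * ((G g).card : ℝ) * (((G g).card : ℝ) - 1) ^ 2
          / (2 * (((G g).card : ℝ) + 1)) := by
  rw [trace_Mmom_inv hdisj, sum_gPair_relDegree hdisj (fun k => 1 - 2 / ((k : ℝ) + 1)),
    Finset.mul_sum]
  congr 1
  refine Finset.sum_congr rfl fun g _ => ?_
  field_simp
  ring

/-- `trace(M(ξ₀)⁻¹) = 1 + ∑_g 3|G_g|(|G_g|-1)²/(2(|G_g|+1))`. -/
theorem stmt12 (m n : ℕ) (G : Fin n → Finset (Fin m))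
    (hdisj : ∀ g h : Fin n, g ≠ h → Disjoint (G g) (G h))
    (hcover : ∀ x : Fin m, ∃ g, x ∈ G g)
    (hne : ∀ g, (G g).Nonempty) :
    Matrix.trace (Mmom G)⁻¹
      = 1 + ∑ g, 3 * ((G g).card : ℝ) * (((G g).card : ℝ) - 1) ^ 2
          / (2 * (((G g).card : ℝ) + 1)) :=
  stmt12_general m n G hdisj
end

section
/- Let φ be a concave, signed-permutation-invariant function on positive semidefinite matrices of order p. If for every design measure ξ on a finite set S and every s ∈ S there is a signed permutation matrix R_s with M(s·ξ) = R_s^T M(ξ) R_s, and the average (1/|S|) ∑_{s∈S} M(s·ξ) equals M(ξ_0) for the uniform measure ξ_0, then φ(M(ξ)) ≤ φ(M(ξ_0)) for every design measure ξ; i.e., the uniform measure is φ-optimal. -/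
open Matrix

/-- A signed permutation matrix: each column has exactly one nonzero entry,
equal to `±1`. -/
def IsSignedPermMatrix {p : ℕ} (R : Matrix (Fin p) (Fin p) ℝ) : Prop :=
  ∃ (σ : Equiv.Perm (Fin p)) (ε : Fin p → ℝ), (∀ i, ε i = 1 ∨ ε i = -1) ∧
    ∀ i j, R i j = if i = σ j then ε j else 0

/-- The moment matrix `M(ξ) = ∑_a ξ(a) x(a) x(a)ᵀ` of a design measure `ξ`. -/
noncomputable def momentOf {S : Type*} [Fintype S] {p : ℕ}
    (x : S → Fin p → ℝ) (ξ : S → ℝ) : Matrix (Fin p) (Fin p) ℝ :=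
  ∑ a, ξ a • Matrix.vecMulVec (x a) (x a)

/-!
Averaging over the group: each `M(s·ξ) = R_sᵀ M(ξ) R_s` has the same `φ`-value as `M(ξ)`, and
their mean is `M(ξ₀)`, so Jensen's inequality for the concave `φ` gives `φ(M(ξ)) ≤ φ(M(ξ₀))`.
-/

theorem Matrix.convex_setOf_posSemidef {n : Type*} :
    Convex ℝ {A : Matrix n n ℝ | A.PosSemidef} :=
  fun _ hA _ hB _ _ ha hb _ => (hA.smul ha).add (hB.smul hb)

section Moment

variable {S : Type*} [Fintype S] {p : ℕ}

theorem posSemidef_momentOf (x : S → Fin p → ℝ) {ξ : S → ℝ} (hξ : ∀ a, 0 ≤ ξ a) :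
    (momentOf x ξ).PosSemidef :=
  posSemidef_sum _ fun a _ => by
    simpa using (posSemidef_vecMulVec_self_star (x a)).smul (hξ a)

theorem transpose_mul_momentOf_mul (x : S → Fin p → ℝ) (ξ : S → ℝ)
    (Q : Matrix (Fin p) (Fin p) ℝ) :
    Qᵀ * momentOf x ξ * Q = momentOf (fun a => x a ᵥ* Q) ξ := by
  simp only [momentOf, Matrix.mul_sum, Matrix.sum_mul, Matrix.mul_smul, Matrix.smul_mul,
    mul_vecMulVec, vecMulVec_mul, mulVec_transpose]

theorem sum_momentOf_mul_left [Group S] (x : S → Fin p → ℝ) (ξ : S → ℝ) :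
    ∑ s, momentOf (fun a => x (s * a)) ξ = (∑ a, ξ a) • ∑ a, vecMulVec (x a) (x a) := by
  simp only [momentOf]
  rw [Finset.sum_comm, Finset.sum_smul]
  refine Finset.sum_congr rfl fun b _ => ?_
  rw [← Finset.smul_sum]
  exact congrArg _ (Fintype.sum_equiv (Equiv.mulRight b) _ _ fun _ => rfl)

theorem momentOf_const (x : S → Fin p → ℝ) (c : ℝ) :
    momentOf x (fun _ => c) = c • ∑ a, vecMulVec (x a) (x a) :=
  Finset.smul_sum.symm

end Moment

/-- if `φ` is concave on PSD matrices and invariant under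
conjugation by signed permutation matrices, and the feature map satisfies
`x(s·a)ᵀ = x(a)ᵀ R_s` for signed permutation matrices `R_s` (so that
`M(s·ξ) = R_sᵀ M(ξ) R_s` and the average of the `M(s·ξ)` is `M(ξ₀)`),
then the uniform measure `ξ₀` is `φ`-optimal. -/
theorem stmt14 {S : Type*} [Group S] [Fintype S] {p : ℕ}
    (x : S → Fin p → ℝ) (R : S → Matrix (Fin p) (Fin p) ℝ)
    (hR : ∀ s, IsSignedPermMatrix (R s))
    (hx : ∀ s a, x (s * a) = Matrix.vecMul (x a) (R s))
    (φ : Matrix (Fin p) (Fin p) ℝ → ℝ)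
    (hconc : ∀ A B : Matrix (Fin p) (Fin p) ℝ, A.PosSemidef → B.PosSemidef →
      ∀ t : ℝ, 0 ≤ t → t ≤ 1 →
        t * φ A + (1 - t) * φ B ≤ φ (t • A + (1 - t) • B))
    (hinv : ∀ (M Q : Matrix (Fin p) (Fin p) ℝ), IsSignedPermMatrix Q →
      φ (Qᵀ * M * Q) = φ M)
    (ξ : S → ℝ) (hξ0 : ∀ a, 0 ≤ ξ a) (hξ1 : ∑ a, ξ a = 1) :
    φ (momentOf x ξ) ≤ φ (momentOf x fun _ => ((Fintype.card S : ℝ))⁻¹) := by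
  have hφ : ConcaveOn ℝ {A | A.PosSemidef} φ :=
    ⟨convex_setOf_posSemidef, fun A hA B hB a b ha hb hab => by
      obtain rfl : b = 1 - a := by linarith
      exact hconc A B hA hB a ha (by linarith)⟩
  set w : ℝ := (Fintype.card S : ℝ)⁻¹
  have hw : ∑ _s : S, w = 1 := by simp [w]
  have hconj : ∀ s, (R s)ᵀ * momentOf x ξ * R s = momentOf (fun a => x (s * a)) ξ := by
    intro s
    simp only [transpose_mul_momentOf_mul, hx]
  calc φ (momentOf x ξ)
      = ∑ s, w • φ (momentOf (fun a => x (s * a)) ξ) := by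
        simp only [← hconj, hinv _ _ (hR _), ← Finset.sum_smul, hw, one_smul]
    _ ≤ φ (∑ s, w • momentOf (fun a => x (s * a)) ξ) :=
        hφ.le_map_sum (fun _ _ => by positivity) hw
          fun s _ => posSemidef_momentOf _ hξ0
    _ = φ (momentOf x fun _ => w) := by
        rw [← Finset.smul_sum, sum_momentOf_mul_left, hξ1, one_smul, momentOf_const]
end

section
/- For a uniformly random permutation of {1,...,m} constrained so that i_c precedes j_c, and for three distinct indices i < j < k none of whose ordered pairs (i,j), (i,k), (j,k) equals (i_c, j_c), the second moments satisfy E[I_{ij} I_{ik}] = 1/3, E[I_{ik} I_{jk}] = 1/3, and E[I_{ij} I_{jk}] = −1/3, identical to the unconstrained case. -/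
/-!
Since `1[ic before jc] = (1 + I_{ic jc}) / 2`, a sum over the constrained permutations is half
the sum over all of `Sₘ` plus half the same sum weighted by `I_{ic jc}`. Reversing positions
(`π ↦ π * Fin.revPerm`) negates every `I_{ab}`, so every product of an odd number of them sums
to zero over `Sₘ`; hence `|S| = m!/2` and the constrained sums of `I_{ab} I_{ac}` are half the
unconstrained ones. Over `Sₘ`, the sums of `I_{ab} I_{ac}`, `I_{ba} I_{bc}`, `I_{ca} I_{cb}`
agree by relabelling values, and pointwise they add up to `1` because exactly one of `a, b, c`
lies between the other two; so each is `m!/3`.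
-/

open Finset Equiv Nat

namespace Pwo

variable {m : ℕ} {a b c : Fin m}

theorem pwo_swap (hab : a ≠ b) (π : Perm (Fin m)) : pwo b a π = -pwo a b π := by
  have hpos : π.symm a ≠ π.symm b := π.symm.injective.ne hab
  unfold pwo
  split_ifs <;> first | omega | norm_num

theorem pwo_mul_left (σ π : Perm (Fin m)) (a b : Fin m) :
    pwo (σ a) (σ b) (σ * π) = pwo a b π := by
  simp [pwo, Perm.mul_def]

theorem pwo_mul_revPerm (hab : a ≠ b) (π : Perm (Fin m)) :
    pwo a b (π * Fin.revPerm) = -pwo a b π := by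
  have hpos : π.symm a ≠ π.symm b := π.symm.injective.ne hab
  simp only [pwo, Perm.mul_def, symm_trans_apply, Fin.revPerm_symm, Fin.revPerm_apply,
    Fin.rev_lt_rev]
  split_ifs <;> first | omega | norm_num

theorem pwo_mul_pwo_add_pwo_mul_pwo_add_pwo_mul_pwo (hab : a ≠ b) (hac : a ≠ c) (hbc : b ≠ c)
    (π : Perm (Fin m)) :
    pwo a b π * pwo a c π + pwo b a π * pwo b c π + pwo c a π * pwo c b π = 1 := by
  have hab' : π.symm a ≠ π.symm b := π.symm.injective.ne hab
  have hac' : π.symm a ≠ π.symm c := π.symm.injective.ne hac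
  have hbc' : π.symm b ≠ π.symm c := π.symm.injective.ne hbc
  unfold pwo
  split_ifs <;> first | omega | norm_num

theorem sum_eq_zero_of_mul_revPerm {f : Perm (Fin m) → ℝ}
    (hf : ∀ π, f (π * Fin.revPerm) = -f π) : ∑ π, f π = 0 := by
  have h := Equiv.sum_comp (Equiv.mulRight Fin.revPerm) f
  simp only [coe_mulRight, hf, sum_neg_distrib] at h
  linarith

theorem sum_pwo_eq_zero (hab : a ≠ b) : ∑ π : Perm (Fin m), pwo a b π = 0 :=
  sum_eq_zero_of_mul_revPerm (pwo_mul_revPerm hab)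

theorem sum_pwo_mul_pwo_mul_pwo_eq_zero {d e f : Fin m} (hab : a ≠ b) (hcd : c ≠ d)
    (hef : e ≠ f) :
    ∑ π : Perm (Fin m), pwo a b π * pwo c d π * pwo e f π = 0 :=
  sum_eq_zero_of_mul_revPerm fun π => by
    rw [pwo_mul_revPerm hab, pwo_mul_revPerm hcd, pwo_mul_revPerm hef]; ring

theorem sum_pwo_mul_pwo_apply (σ : Perm (Fin m)) (a b c : Fin m) :
    ∑ π, pwo (σ a) (σ b) π * pwo (σ a) (σ c) π = ∑ π, pwo a b π * pwo a c π := by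
  rw [← Equiv.sum_comp (Equiv.mulLeft σ)]
  simp only [coe_mulLeft, pwo_mul_left]

theorem sum_pwo_mul_pwo (hab : a ≠ b) (hac : a ≠ c) (hbc : b ≠ c) :
    ∑ π : Perm (Fin m), pwo a b π * pwo a c π = m ! / 3 := by
  have hb : ∑ π, pwo b a π * pwo b c π = ∑ π, pwo a b π * pwo a c π := by
    simpa [swap_apply_of_ne_of_ne hac.symm hbc.symm] using sum_pwo_mul_pwo_apply (swap a b) a b c
  have hc : ∑ π, pwo c a π * pwo c b π = ∑ π, pwo a b π * pwo a c π := by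
    have := sum_pwo_mul_pwo_apply (swap a c) a c b
    simp only [swap_apply_left, swap_apply_right, swap_apply_of_ne_of_ne hab.symm hbc] at this
    simpa only [mul_comm] using this
  have hsum := sum_congr rfl fun π (_ : π ∈ univ) =>
    pwo_mul_pwo_add_pwo_mul_pwo_add_pwo_mul_pwo hab hac hbc π
  rw [sum_add_distrib, sum_add_distrib, hb, hc, sum_const, Finset.card_univ, Fintype.card_perm,
    Fintype.card_fin, nsmul_eq_mul, mul_one] at hsum
  linarith

theorem sum_filter_lt (a b : Fin m) (f : Perm (Fin m) → ℝ) :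
    ∑ π ∈ univ.filter (fun π : Perm (Fin m) => π.symm a < π.symm b), f π =
      (∑ π, f π + ∑ π, f π * pwo a b π) / 2 := by
  rw [sum_filter, ← sum_add_distrib, sum_div]
  refine sum_congr rfl fun π _ => ?_
  unfold pwo
  split_ifs <;> ring

theorem card_filter_lt (hab : a ≠ b) :
    ((univ.filter (fun π : Perm (Fin m) => π.symm a < π.symm b)).card : ℝ) = m ! / 2 := by
  have := sum_filter_lt a b (fun _ => 1)
  simp only [sum_const, nsmul_eq_mul, mul_one, one_mul, sum_pwo_eq_zero hab, Finset.card_univ,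
    Fintype.card_perm, Fintype.card_fin, add_zero] at this
  exact this

theorem sum_filter_lt_pwo_mul_pwo {d e : Fin m} (hab : a ≠ b) (hac : a ≠ c) (hbc : b ≠ c)
    (hde : d ≠ e) :
    ∑ π ∈ univ.filter (fun π : Perm (Fin m) => π.symm d < π.symm e), pwo a b π * pwo a c π =
      m ! / 6 := by
  rw [sum_filter_lt, sum_pwo_mul_pwo hab hac hbc, sum_pwo_mul_pwo_mul_pwo_eq_zero hab hac hde]
  ring

end Pwo

open Pwo

theorem stmt15_general (m : ℕ) (ic jc : Fin m) (hc : ic ≠ jc)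
    (i j k : Fin m) (hij : i < j) (hjk : j < k) :
    let S := Finset.univ.filter fun π : Equiv.Perm (Fin m) => π.symm ic < π.symm jc
    (∑ π ∈ S, pwo i j π * pwo i k π) / (S.card : ℝ) = 1 / 3 ∧
    (∑ π ∈ S, pwo i k π * pwo j k π) / (S.card : ℝ) = 1 / 3 ∧
    (∑ π ∈ S, pwo i j π * pwo j k π) / (S.card : ℝ) = -(1 / 3) := by
  intro S
  have hik : i ≠ k := (hij.trans hjk).ne
  have mean {a b c : Fin m} (hab : a ≠ b) (hac : a ≠ c) (hbc : b ≠ c) :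
      (∑ π ∈ S, pwo a b π * pwo a c π) / (S.card : ℝ) = 1 / 3 := by
    rw [sum_filter_lt_pwo_mul_pwo hab hac hbc hc, card_filter_lt hc]
    field_simp
    norm_num
  refine ⟨mean hij.ne hik hjk.ne, ?_, ?_⟩
  · have h π : pwo i k π * pwo j k π = pwo k i π * pwo k j π := by
      rw [pwo_swap hik, pwo_swap hjk.ne]; ring
    simp only [h]
    exact mean hik.symm hjk.ne' hij.ne
  · have h π : pwo i j π * pwo j k π = -(pwo j i π * pwo j k π) := by
      rw [pwo_swap hij.ne]; ring
    simp only [h, sum_neg_distrib, neg_div]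
    rw [mean hij.ne' hjk.ne hik]

/-- for permutations uniform on those with `i_c` before `j_c`
and distinct `i < j < k` none of whose pairs is the constrained pair,
`E[I_ij I_ik] = 1/3`, `E[I_ik I_jk] = 1/3`, `E[I_ij I_jk] = -1/3`, as in the
unconstrained case. -/
theorem stmt15 (m : ℕ) (hm : 3 ≤ m) (ic jc : Fin m) (hc : ic ≠ jc)
    (i j k : Fin m) (hij : i < j) (hjk : j < k)
    (h1 : ¬((i = ic ∧ j = jc) ∨ (i = jc ∧ j = ic)))
    (h2 : ¬((i = ic ∧ k = jc) ∨ (i = jc ∧ k = ic)))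
    (h3 : ¬((j = ic ∧ k = jc) ∨ (j = jc ∧ k = ic))) :
    let S := Finset.univ.filter fun π : Equiv.Perm (Fin m) => π.symm ic < π.symm jc
    (∑ π ∈ S, pwo i j π * pwo i k π) / (S.card : ℝ) = 1 / 3 ∧
    (∑ π ∈ S, pwo i k π * pwo j k π) / (S.card : ℝ) = 1 / 3 ∧
    (∑ π ∈ S, pwo i j π * pwo j k π) / (S.card : ℝ) = -(1 / 3) :=
  stmt15_general m ic jc hc i j k hij hjk
end

section
/- The moment matrix of the uniform measure on permutations of {1,...,m} constrained by i_c → j_c, with respect to the model vector x(π) = (1, (I_{ij}(π))_{(i,j)≠(i_c,j_c), i<j}), is obtained from the unconstrained full PWO moment matrix (without constant term) of order m(m−1)/2 by a simultaneous row-and-column permutation; in particular the two matrices have the same determinant and the same eigenvalue multiset. -/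
/-- The model vector `x(π) = (1, (I_{ij}(π))_{(i,j) ≠ (i_c,j_c), i<j})` of the
constrained model. -/
noncomputable def xcon (m : ℕ) (ic jc : Fin m) (π : Equiv.Perm (Fin m)) :
    (Unit ⊕ {p : PairIdx m // p.1 ≠ (ic, jc)}) → ℝ
  | Sum.inl _ => 1
  | Sum.inr p => if π.symm p.1.1.1 < π.symm p.1.1.2 then 1 else -1

/-- The moment matrix of the uniform measure on the permutations with `i_c`
before `j_c`, with respect to the constrained model vector. -/
noncomputable def Mcon (m : ℕ) (ic jc : Fin m) :
    Matrix (Unit ⊕ {p : PairIdx m // p.1 ≠ (ic, jc)})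
           (Unit ⊕ {p : PairIdx m // p.1 ≠ (ic, jc)}) ℝ :=
  ((Finset.univ.filter fun π : Equiv.Perm (Fin m) =>
      π.symm ic < π.symm jc).card : ℝ)⁻¹ •
    ∑ π ∈ Finset.univ.filter fun π : Equiv.Perm (Fin m) => π.symm ic < π.symm jc,
      Matrix.vecMulVec (xcon m ic jc π) (xcon m ic jc π)

/-!
Write `precSign a b π = ±1` for the relative order of `a` and `b` in `π`. Over all of `Sₘ`,
composing with the reversal flips every `precSign`, so products of an odd number of them sum
to zero; relabelling `π ↦ σπ` shows that `∑ precSign a b * precSign c d` depends only on how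
the pairs overlap, and the pointwise identity `precSign_cyclic` pins the value `m!/3` for pairs
sharing an endpoint. Hence the uniform second moments are `I + V/3`. Conditioning on
`precSign ic jc = 1` halves the number of permutations and adds
`½ ∑ precSign ic jc * precSign p * precSign q = 0`, so the second moments are unchanged, while
the constant coordinate `1` of `x(π)` coincides with `precSign ic jc` on the constrained set.
-/

open Finset Nat

noncomputable def precSign {m : ℕ} (a b : Fin m) (π : Equiv.Perm (Fin m)) : ℝ :=
  if π.symm a < π.symm b then 1 else -1

section precSign

variable {m : ℕ} {a b c d : Fin m}

lemma precSign_mul_self (a b : Fin m) (π : Equiv.Perm (Fin m)) :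
    precSign a b π * precSign a b π = 1 := by
  unfold precSign; split_ifs <;> norm_num

lemma precSign_comm (hab : a ≠ b) (π : Equiv.Perm (Fin m)) :
    precSign b a π = -precSign a b π := by
  have hne : π.symm a ≠ π.symm b := π.symm.injective.ne hab
  unfold precSign
  rcases hne.lt_or_gt with h | h
  · rw [if_neg h.asymm, if_pos h]
  · rw [if_pos h, if_neg h.asymm, neg_neg]

lemma precSign_inv_mul (σ π : Equiv.Perm (Fin m)) (a b : Fin m) :
    precSign a b (σ⁻¹ * π) = precSign (σ a) (σ b) π := rfl

lemma precSign_mul_revPerm (hab : a ≠ b) (π : Equiv.Perm (Fin m)) :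
    precSign a b (π * Fin.revPerm) = -precSign a b π := by
  have hne : π.symm a ≠ π.symm b := π.symm.injective.ne hab
  change (if Fin.rev (π.symm a) < Fin.rev (π.symm b) then (1 : ℝ) else -1) = -precSign a b π
  simp only [Fin.rev_lt_rev, precSign]
  rcases hne.lt_or_gt with h | h
  · rw [if_neg h.asymm, if_pos h]
  · rw [if_pos h, if_neg h.asymm, neg_neg]

/-- Of three distinct items exactly one comes first, and only its term contributes `+1`;
the other two terms are `±1` of opposite signs. -/
lemma precSign_cyclic (hab : a ≠ b) (hac : a ≠ c) (hbc : b ≠ c) (π : Equiv.Perm (Fin m)) :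
    precSign a b π * precSign a c π + precSign b a π * precSign b c π
      + precSign c b π * precSign c a π = 1 := by
  have h₁ : π.symm a ≠ π.symm b := π.symm.injective.ne hab
  have h₂ : π.symm a ≠ π.symm c := π.symm.injective.ne hac
  have h₃ : π.symm b ≠ π.symm c := π.symm.injective.ne hbc
  unfold precSign
  split_ifs <;> grind

end precSign

section moments

variable {m : ℕ} {a b c d : Fin m}

lemma sum_perm_eq_zero_of_mul_revPerm {f : Equiv.Perm (Fin m) → ℝ}
    (hf : ∀ π, f (π * Fin.revPerm) = -f π) : ∑ π, f π = 0 := by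
  have h := Equiv.sum_comp (Equiv.mulRight Fin.revPerm) f
  simp only [Equiv.coe_mulRight, hf, sum_neg_distrib] at h
  linarith

lemma sum_precSign (hab : a ≠ b) : ∑ π, precSign a b π = 0 :=
  sum_perm_eq_zero_of_mul_revPerm (precSign_mul_revPerm hab)

lemma sum_precSign_mul_precSign_mul_precSign {e f : Fin m} (hab : a ≠ b) (hcd : c ≠ d)
    (hef : e ≠ f) : ∑ π, precSign a b π * precSign c d π * precSign e f π = 0 :=
  sum_perm_eq_zero_of_mul_revPerm fun π => by
    rw [precSign_mul_revPerm hab, precSign_mul_revPerm hcd, precSign_mul_revPerm hef]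
    ring

lemma sum_precSign_mul_precSign_relabel (σ : Equiv.Perm (Fin m)) (a b c d : Fin m) :
    ∑ π, precSign (σ a) (σ b) π * precSign (σ c) (σ d) π
      = ∑ π, precSign a b π * precSign c d π := by
  rw [← Equiv.sum_comp (Equiv.mulLeft σ⁻¹) fun π => precSign a b π * precSign c d π]
  simp only [Equiv.coe_mulLeft, precSign_inv_mul]

/-- The three sums in `precSign_cyclic` are relabelings of each other. -/
lemma sum_precSign_mul_precSign_share_fst (hab : a ≠ b) (hac : a ≠ c) (hbc : b ≠ c) :
    ∑ π, precSign a b π * precSign a c π = m ! / 3 := by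
  have e₁ := sum_precSign_mul_precSign_relabel (Equiv.swap a b) a b a c
  have e₂ := sum_precSign_mul_precSign_relabel (Equiv.swap a c) a b a c
  simp only [Equiv.swap_apply_left, Equiv.swap_apply_right,
    Equiv.swap_apply_of_ne_of_ne hac.symm hbc.symm,
    Equiv.swap_apply_of_ne_of_ne hab.symm hbc] at e₁ e₂
  have hsum : ∑ π : Equiv.Perm (Fin m), (precSign a b π * precSign a c π
      + precSign b a π * precSign b c π + precSign c b π * precSign c a π) = m ! := by
    simp [precSign_cyclic hab hac hbc, Fintype.card_perm]
  rw [sum_add_distrib, sum_add_distrib, e₁, e₂] at hsum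
  linarith

lemma sum_precSign_mul_precSign_share_snd (hab : a ≠ b) (hac : a ≠ c) (hbc : b ≠ c) :
    ∑ π, precSign b a π * precSign c a π = m ! / 3 := by
  simp only [precSign_comm hab, precSign_comm hac, neg_mul_neg]
  exact sum_precSign_mul_precSign_share_fst hab hac hbc

lemma sum_precSign_mul_precSign_chain (hab : a ≠ b) (hac : a ≠ c) (hbc : b ≠ c) :
    ∑ π, precSign a b π * precSign b c π = -(m ! / 3) := by
  simp only [precSign_comm hab.symm, neg_mul, sum_neg_distrib]
  rw [sum_precSign_mul_precSign_share_fst hab.symm hbc hac]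

lemma sum_precSign_mul_precSign_disjoint (hab : a ≠ b) (hca : c ≠ a) (hcb : c ≠ b)
    (hda : d ≠ a) (hdb : d ≠ b) : ∑ π, precSign a b π * precSign c d π = 0 := by
  have h := sum_precSign_mul_precSign_relabel (Equiv.swap a b) a b c d
  simp only [Equiv.swap_apply_left, Equiv.swap_apply_right, Equiv.swap_apply_of_ne_of_ne hca hcb,
    Equiv.swap_apply_of_ne_of_ne hda hdb, precSign_comm hab, neg_mul, sum_neg_distrib] at h
  linarith

lemma sum_precSign_mul_precSign_eq_factorial_mul (p q : PairIdx m) :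
    ∑ π, precSign p.1.1 p.1.2 π * precSign q.1.1 q.1.2 π
      = m ! * (1 + (3 : ℝ)⁻¹ • Vmat m) p q := by
  by_cases hpq : p = q
  · subst hpq
    simp [Vmat, precSign_mul_self, Fintype.card_perm]
  simp only [Matrix.add_apply, Matrix.one_apply_ne hpq, Matrix.smul_apply, Vmat, if_neg hpq,
    smul_eq_mul, zero_add]
  obtain ⟨⟨a, b⟩, hab⟩ := p
  obtain ⟨⟨c, d⟩, hcd⟩ := q
  simp only [Subtype.mk.injEq, Prod.mk.injEq] at hpq ⊢
  rcases eq_or_ne a c with rfl | hac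
  · rw [if_pos (Or.inl rfl),
      sum_precSign_mul_precSign_share_fst hab.ne hcd.ne fun h => hpq ⟨rfl, h⟩]
    ring
  rcases eq_or_ne b d with rfl | hbd
  · rw [if_pos (Or.inr rfl), sum_precSign_mul_precSign_share_snd hab.ne' hcd.ne' hac]
    ring
  rw [if_neg (by tauto)]
  rcases eq_or_ne b c with rfl | hbc
  · rw [if_pos (Or.inl rfl),
      sum_precSign_mul_precSign_chain hab.ne (hab.trans hcd).ne hcd.ne]
    ring
  rcases eq_or_ne a d with rfl | had
  · rw [if_pos (by simp)]
    simp only [mul_comm (precSign a b _)]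
    rw [sum_precSign_mul_precSign_chain hcd.ne (hcd.trans hab).ne hab.ne]
    ring
  rw [if_neg (by tauto),
    sum_precSign_mul_precSign_disjoint hab.ne hac.symm hbc.symm had.symm hbd.symm, mul_zero,
    mul_zero]

lemma sum_filter_precedes (f : Equiv.Perm (Fin m) → ℝ) :
    ∑ π ∈ univ.filter (fun π => π.symm a < π.symm b), f π
      = (∑ π, f π + ∑ π, precSign a b π * f π) / 2 := by
  rw [sum_filter, ← sum_add_distrib, sum_div]
  refine sum_congr rfl fun π _ => ?_
  unfold precSign
  split_ifs <;> ring

lemma card_filter_precedes (hab : a ≠ b) :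
    ((univ.filter fun π : Equiv.Perm (Fin m) => π.symm a < π.symm b).card : ℝ) = m ! / 2 := by
  simpa [sum_precSign hab, Fintype.card_perm] using sum_filter_precedes (a := a) (b := b) fun _ => 1

lemma sum_filter_precedes_precSign_mul_precSign (hab : a ≠ b) (p q : PairIdx m) :
    ∑ π ∈ univ.filter (fun π => π.symm a < π.symm b),
        precSign p.1.1 p.1.2 π * precSign q.1.1 q.1.2 π
      = m ! / 2 * (1 + (3 : ℝ)⁻¹ • Vmat m) p q := by
  simp only [sum_filter_precedes, sum_precSign_mul_precSign_eq_factorial_mul, ← mul_assoc,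
    sum_precSign_mul_precSign_mul_precSign hab p.2.ne q.2.ne]
  ring

end moments

def constrainedIdxEquiv {m : ℕ} {ic jc : Fin m} (hlt : ic < jc) :
    (Unit ⊕ {p : PairIdx m // p.1 ≠ (ic, jc)}) ≃ PairIdx m where
  toFun := Sum.elim (fun _ => ⟨(ic, jc), hlt⟩) Subtype.val
  invFun p := if h : p.1 = (ic, jc) then Sum.inl () else Sum.inr ⟨p, h⟩
  left_inv := by
    rintro (⟨⟩ | ⟨p, hp⟩)
    · simp
    · simp [hp]
  right_inv p := by
    by_cases h : p.1 = (ic, jc)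
    · simp only [dif_pos h, Sum.elim_inl]
      exact Subtype.ext h.symm
    · simp only [dif_neg h, Sum.elim_inr]

lemma xcon_eq_precSign {m : ℕ} {ic jc : Fin m} (hlt : ic < jc) {π : Equiv.Perm (Fin m)}
    (hπ : π.symm ic < π.symm jc) (a : Unit ⊕ {p : PairIdx m // p.1 ≠ (ic, jc)}) :
    xcon m ic jc π a
      = precSign (constrainedIdxEquiv hlt a).1.1 (constrainedIdxEquiv hlt a).1.2 π := by
  rcases a with ⟨⟩ | p
  · exact (if_pos hπ).symm
  · rfl

lemma Mcon_eq_submatrix {m : ℕ} {ic jc : Fin m} (hlt : ic < jc) :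
    Mcon m ic jc
      = (1 + (3 : ℝ)⁻¹ • Vmat m).submatrix (constrainedIdxEquiv hlt) (constrainedIdxEquiv hlt) := by
  ext a b
  have hfac : (m ! : ℝ) / 2 ≠ 0 := by positivity
  rw [Mcon, Matrix.smul_apply, Matrix.sum_apply, smul_eq_mul, Matrix.submatrix_apply,
    card_filter_precedes hlt.ne]
  simp only [Matrix.vecMulVec_apply]
  rw [sum_congr rfl fun π hπ => by
      rw [xcon_eq_precSign hlt (mem_filter.mp hπ).2 a,
        xcon_eq_precSign hlt (mem_filter.mp hπ).2 b],
    sum_filter_precedes_precSign_mul_precSign hlt.ne, inv_mul_cancel_left₀ hfac]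

/-- the constrained moment matrix is obtained from the
unconstrained full PWO moment matrix `I + V/3` by a simultaneous
row-and-column permutation; in particular the determinants and characteristic
polynomials (hence eigenvalue multisets) coincide. -/
theorem stmt16 (m : ℕ) (ic jc : Fin m) (hlt : ic < jc) :
    ∃ e : (Unit ⊕ {p : PairIdx m // p.1 ≠ (ic, jc)}) ≃ PairIdx m,
      (∀ a b, Mcon m ic jc a b = (1 + (3 : ℝ)⁻¹ • Vmat m) (e a) (e b)) ∧
      (Mcon m ic jc).det = (1 + (3 : ℝ)⁻¹ • Vmat m).det ∧
      (Mcon m ic jc).charpoly = (1 + (3 : ℝ)⁻¹ • Vmat m).charpoly := by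
  have hM := Mcon_eq_submatrix hlt
  refine ⟨constrainedIdxEquiv hlt, fun a b => by rw [hM, Matrix.submatrix_apply], ?_, ?_⟩
  · rw [hM, Matrix.det_submatrix_equiv_self]
  · rw [hM, ← Equiv.symm_symm (constrainedIdxEquiv hlt), ← Matrix.reindex_apply,
      Matrix.charpoly_reindex]
end

section
/- If D_g are arrays (g = 1,...,n_G) with n_g rows each whose rows are permutations of the groups G_g, then the product design D consisting of all ∏_g n_g concatenations (w_1,...,w_{n_G}) of rows w_g of D_g has moment matrix under the PWGCO model equal to the block-diagonal matrix diag(1, M_1, ..., M_{n_G}), where M_g is the within-group moment matrix of D_g, provided each D_g has all within-group pairwise factor column sums equal to zero. -/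
/-- Pairs `{i < j}` with both components in group `G g`. -/
abbrev GPairG {m n : ℕ} (G : Fin n → Finset (Fin m)) (g : Fin n) :=
  {p : Fin m × Fin m // p.1 < p.2 ∧ p.1 ∈ G g ∧ p.2 ∈ G g}

/-- Within-group pairs tagged with their group. -/
abbrev TPair {m n : ℕ} (G : Fin n → Finset (Fin m)) :=
  {q : Fin n × Fin m × Fin m // q.2.1 < q.2.2 ∧ q.2.1 ∈ G q.1 ∧ q.2.2 ∈ G q.1}

/-- The tagged pair corresponding to a pair within group `g`. -/
def embP {m n : ℕ} (G : Fin n → Finset (Fin m)) (g : Fin n)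
    (p : GPairG G g) : TPair G := ⟨(g, p.1), p.2⟩

/-- The pairwise factor `I_{ij}` of a row (an ordering of group `G g`): `1` if
`p.1` appears before `p.2` in the row, `-1` otherwise. -/
noncomputable def ifacRow {m n : ℕ} (G : Fin n → Finset (Fin m)) (g : Fin n)
    (e : Fin ((G g).card) ≃ {x : Fin m // x ∈ G g}) (p : GPairG G g) : ℝ :=
  if e.symm ⟨p.1.1, p.2.2.1⟩ < e.symm ⟨p.1.2, p.2.2.2⟩ then 1 else -1

/-- The PWGCO model expansion of the concatenated row `(w_1,…,w_{n_G})`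
determined by a tuple `t` of row indices. -/
noncomputable def xprod {m n : ℕ} (G : Fin n → Finset (Fin m)) (N : Fin n → ℕ)
    (D : (g : Fin n) → Fin (N g) → (Fin ((G g).card) ≃ {x : Fin m // x ∈ G g}))
    (t : (g : Fin n) → Fin (N g)) : (Unit ⊕ TPair G) → ℝ
  | Sum.inl _ => 1
  | Sum.inr q => ifacRow G q.1.1 (D q.1.1 (t q.1.1)) ⟨q.1.2, q.2⟩

/-- Moment matrix of the product design (all concatenations of rows). -/
noncomputable def Mprod {m n : ℕ} (G : Fin n → Finset (Fin m)) (N : Fin n → ℕ)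
    (D : (g : Fin n) → Fin (N g) → (Fin ((G g).card) ≃ {x : Fin m // x ∈ G g})) :
    Matrix (Unit ⊕ TPair G) (Unit ⊕ TPair G) ℝ :=
  ((∏ g, N g : ℕ) : ℝ)⁻¹ •
    ∑ t : (g : Fin n) → Fin (N g),
      Matrix.vecMulVec (xprod G N D t) (xprod G N D t)

/-- Within-group moment matrix of the design `D_g`. -/
noncomputable def Mgrp {m n : ℕ} (G : Fin n → Finset (Fin m)) (N : Fin n → ℕ)
    (D : (g : Fin n) → Fin (N g) → (Fin ((G g).card) ≃ {x : Fin m // x ∈ G g}))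
    (g : Fin n) : Matrix (GPairG G g) (GPairG G g) ℝ :=
  ((N g : ℝ))⁻¹ • ∑ w : Fin (N g),
    Matrix.vecMulVec (fun p => ifacRow G g (D g w) p) (fun p => ifacRow G g (D g w) p)

section Aux

private lemma sum_pi_eq_prod {n : ℕ} (N : Fin n → ℕ) (F : ∀ g, Fin (N g) → ℝ) :
    ∑ t : (g : Fin n) → Fin (N g), ∏ g, F g (t g) = ∏ g, ∑ w, F g w :=
  (Fintype.prod_sum F).symm

private lemma sum_eval_one {n : ℕ} (N : Fin n → ℕ) (g0 : Fin n) (f : Fin (N g0) → ℝ)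
    (hf : ∑ w, f w = 0) :
    ∑ t : (g : Fin n) → Fin (N g), f (t g0) = 0 := by
  classical
  set F : ∀ g, Fin (N g) → ℝ := Function.update (fun g (_ : Fin (N g)) => (1:ℝ)) g0 f with hF
  have h1 : ∀ t : (g : Fin n) → Fin (N g), f (t g0) = ∏ g, F g (t g) := by
    intro t
    rw [Fintype.prod_eq_single g0]
    · rw [hF, Function.update_self]
    · intro h hh
      rw [hF, Function.update_of_ne hh]
  calc ∑ t : (g : Fin n) → Fin (N g), f (t g0)
      = ∑ t : (g : Fin n) → Fin (N g), ∏ g, F g (t g) := by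
        exact Finset.sum_congr rfl fun t _ => h1 t
    _ = ∏ g, ∑ w, F g w := sum_pi_eq_prod N F
    _ = 0 := by
        apply Finset.prod_eq_zero (Finset.mem_univ g0)
        rw [hF, Function.update_self]; exact hf

private lemma sum_eval_two {n : ℕ} (N : Fin n → ℕ) (g0 g1 : Fin n) (hne : g0 ≠ g1)
    (f : Fin (N g0) → ℝ) (f' : Fin (N g1) → ℝ) (hf : ∑ w, f w = 0) :
    ∑ t : (g : Fin n) → Fin (N g), f (t g0) * f' (t g1) = 0 := by
  classical
  set F : ∀ g, Fin (N g) → ℝ :=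
    Function.update (Function.update (fun g (_ : Fin (N g)) => (1:ℝ)) g0 f) g1 f' with hF
  have h1 : ∀ t : (g : Fin n) → Fin (N g), f (t g0) * f' (t g1) = ∏ g, F g (t g) := by
    intro t
    rw [← Finset.mul_prod_erase Finset.univ _ (Finset.mem_univ g0),
        ← Finset.mul_prod_erase _ _ (Finset.mem_erase.2 ⟨hne.symm, Finset.mem_univ g1⟩)]
    have e0 : F g0 (t g0) = f (t g0) := by
      rw [hF, Function.update_of_ne hne, Function.update_self]
    have e1 : F g1 (t g1) = f' (t g1) := by rw [hF, Function.update_self]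
    have e2 : ∏ h ∈ (Finset.univ.erase g0).erase g1, F h (t h) = 1 := by
      apply Finset.prod_eq_one
      intro h hh
      obtain ⟨h1', h0'⟩ := Finset.mem_erase.1 hh
      obtain ⟨h0'', _⟩ := Finset.mem_erase.1 h0'
      rw [hF, Function.update_of_ne h1', Function.update_of_ne h0'']
    rw [e0, e1, e2, mul_one, mul_comm]
  calc ∑ t : (g : Fin n) → Fin (N g), f (t g0) * f' (t g1)
      = ∑ t : (g : Fin n) → Fin (N g), ∏ g, F g (t g) :=
        Finset.sum_congr rfl fun t _ => h1 t
    _ = ∏ g, ∑ w, F g w := sum_pi_eq_prod N F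
    _ = 0 := by
        apply Finset.prod_eq_zero (Finset.mem_univ g0)
        rw [hF, Function.update_of_ne hne, Function.update_self]; exact hf

private lemma sum_eval_sq {n : ℕ} (N : Fin n → ℕ) (g0 : Fin n) (f : Fin (N g0) → ℝ) :
    ∑ t : (g : Fin n) → Fin (N g), f (t g0)
      = (∏ g ∈ Finset.univ.erase g0, (N g : ℝ)) * ∑ w, f w := by
  classical
  set F : ∀ g, Fin (N g) → ℝ := Function.update (fun g (_ : Fin (N g)) => (1:ℝ)) g0 f with hF
  have h1 : ∀ t : (g : Fin n) → Fin (N g), f (t g0) = ∏ g, F g (t g) := by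
    intro t
    rw [Fintype.prod_eq_single g0]
    · rw [hF, Function.update_self]
    · intro h hh
      rw [hF, Function.update_of_ne hh]
  calc ∑ t : (g : Fin n) → Fin (N g), f (t g0)
      = ∑ t : (g : Fin n) → Fin (N g), ∏ g, F g (t g) :=
        Finset.sum_congr rfl fun t _ => h1 t
    _ = ∏ g, ∑ w, F g w := sum_pi_eq_prod N F
    _ = (∑ w, f w) * ∏ g ∈ Finset.univ.erase g0, ∑ w, F g w := by
        rw [← Finset.mul_prod_erase Finset.univ _ (Finset.mem_univ g0), hF,
          Function.update_self]
    _ = (∏ g ∈ Finset.univ.erase g0, (N g : ℝ)) * ∑ w, f w := by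
        rw [mul_comm]
        congr 1
        apply Finset.prod_congr rfl
        intro h hh
        rw [hF, Function.update_of_ne (Finset.mem_erase.1 hh).1]
        simp

end Aux

/-- if every within-group pairwise factor column of each `D_g`
sums to zero, the moment matrix of the product design is the block-diagonal
matrix `diag(1, M_1, …, M_{n_G})`. -/
theorem stmt17 (m n : ℕ) (G : Fin n → Finset (Fin m)) (N : Fin n → ℕ)
    (D : (g : Fin n) → Fin (N g) → (Fin ((G g).card) ≃ {x : Fin m // x ∈ G g}))
    (hdisj : ∀ g h : Fin n, g ≠ h → Disjoint (G g) (G h))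
    (hN : ∀ g, 0 < N g)
    (hbal : ∀ g (p : GPairG G g), ∑ w : Fin (N g), ifacRow G g (D g w) p = 0) :
    (Mprod G N D (Sum.inl ()) (Sum.inl ()) = 1) ∧
    (∀ q : TPair G, Mprod G N D (Sum.inl ()) (Sum.inr q) = 0 ∧
        Mprod G N D (Sum.inr q) (Sum.inl ()) = 0) ∧
    (∀ (g : Fin n) (p p' : GPairG G g),
        Mprod G N D (Sum.inr (embP G g p)) (Sum.inr (embP G g p'))
          = Mgrp G N D g p p') ∧
    (∀ (g g' : Fin n) (p : GPairG G g) (p' : GPairG G g'), g ≠ g' →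
        Mprod G N D (Sum.inr (embP G g p)) (Sum.inr (embP G g' p')) = 0) := by
    classical
  have hentry : ∀ a b, Mprod G N D a b
      = ((∏ g, N g : ℕ) : ℝ)⁻¹ *
          ∑ t : (g : Fin n) → Fin (N g), xprod G N D t a * xprod G N D t b := by
    intro a b
    simp [Mprod, Matrix.smul_apply, Matrix.sum_apply, Matrix.vecMulVec_apply]
  have hprodne : ((∏ g, N g : ℕ) : ℝ) ≠ 0 := by
    have : 0 < ∏ g, N g := Finset.prod_pos fun g _ => hN g
    exact_mod_cast this.ne'
  refine ⟨?_, ?_, ?_, ?_⟩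
  · rw [hentry]
    simp only [xprod, mul_one]
    rw [Finset.sum_const, Finset.card_univ, Fintype.card_pi]
    simp only [Fintype.card_fin, nsmul_eq_mul, mul_one]
    exact inv_mul_cancel₀ hprodne
  · intro q
    have key : ∑ t : (g : Fin n) → Fin (N g),
        ifacRow G q.1.1 (D q.1.1 (t q.1.1)) ⟨q.1.2, q.2⟩ = 0 :=
      sum_eval_one N q.1.1 (fun w => ifacRow G q.1.1 (D q.1.1 w) ⟨q.1.2, q.2⟩)
        (hbal q.1.1 ⟨q.1.2, q.2⟩)
    constructor
    · rw [hentry]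
      simp only [xprod, one_mul]
      rw [key, mul_zero]
    · rw [hentry]
      simp only [xprod, mul_one]
      rw [key, mul_zero]
  · intro g p p'
    rw [hentry]
    have hx : ∀ (t : (g : Fin n) → Fin (N g)),
        xprod G N D t (Sum.inr (embP G g p)) * xprod G N D t (Sum.inr (embP G g p'))
          = ifacRow G g (D g (t g)) p * ifacRow G g (D g (t g)) p' := fun t => rfl
    simp only [hx]
    rw [sum_eval_sq N g (fun w => ifacRow G g (D g w) p * ifacRow G g (D g w) p')]
    have hsplit : ((∏ g, N g : ℕ) : ℝ)
        = (N g : ℝ) * ∏ h ∈ Finset.univ.erase g, (N h : ℝ) := by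
      push_cast
      exact (Finset.mul_prod_erase Finset.univ (fun h => (N h : ℝ))
        (Finset.mem_univ g)).symm
    have herasene : (∏ h ∈ Finset.univ.erase g, (N h : ℝ)) ≠ 0 := by
      apply Finset.prod_ne_zero_iff.2
      intro h _
      exact_mod_cast (hN h).ne'
    rw [hsplit, mul_inv, Mgrp]
    simp only [Matrix.smul_apply, Matrix.sum_apply, Matrix.vecMulVec_apply,
      smul_eq_mul]
    rw [mul_assoc, inv_mul_cancel_left₀ herasene]
  · intro g g' p p' hgg'
    rw [hentry]
    have hx : ∀ (t : (g : Fin n) → Fin (N g)),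
        xprod G N D t (Sum.inr (embP G g p)) * xprod G N D t (Sum.inr (embP G g' p'))
          = ifacRow G g (D g (t g)) p * ifacRow G g' (D g' (t g')) p' := fun t => rfl
    simp only [hx]
    rw [sum_eval_two N g g' hgg' (fun w => ifacRow G g (D g w) p)
      (fun w => ifacRow G g' (D g' w) p') (hbal g p), mul_zero]
end

section
/- In Construction 3 (odd m case), if D is a design on m−1 components with n rows, then inserting component i into every one of the m possible positions of every row yields a design with n·m rows in which, for every pair j < k with j, k ≠ i, the distribution of the pairwise ordering factor I_{jk} over the new design equals its distribution over D, and for every j ≠ i, the column sum of I factors involving i and j is zero whenever each position split is symmetric. -/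
/-- `i` inserted at position `k` of the row `w` (a listing of the components
other than `i`), giving a listing of all `m` components. -/
def newRow {m : ℕ} (i : Fin m) (w : Fin (m - 1) ≃ {x : Fin m // x ≠ i})
    (k : Fin m) : Fin m → Fin m := fun p =>
  if _h : (p : ℕ) = (k : ℕ) then i
  else if hlt : (p : ℕ) < (k : ℕ) then
    (w ⟨(p : ℕ), by have := k.isLt; omega⟩ : {x : Fin m // x ≠ i})
  else
    (w ⟨(p : ℕ) - 1, by have := p.isLt; omega⟩ : {x : Fin m // x ≠ i})

/-- The pairwise ordering factor of a listing `r`: `1` if `a` precedes `b`,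
`-1` otherwise. -/
noncomputable def ifacF {t m : ℕ} (r : Fin t → Fin m) (a b : Fin m) : ℝ :=
  if ∃ p q : Fin t, p < q ∧ r p = a ∧ r q = b then 1 else -1

section aux
variable {m : ℕ} (i : Fin m) (w : Fin (m - 1) ≃ {x : Fin m // x ≠ i}) (k : Fin m)

lemma newRow_self (p : Fin m) (h : (p : ℕ) = (k : ℕ)) : newRow i w k p = i := by
  simp [newRow, h]

lemma newRow_lt (p : Fin m) (h : (p : ℕ) < (k : ℕ)) :
    newRow i w k p
      = (w ⟨(p : ℕ), by have := k.isLt; omega⟩ : {x : Fin m // x ≠ i}) := by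
  simp [newRow, h, Nat.ne_of_lt h]

lemma newRow_gt (p : Fin m) (h : (k : ℕ) < (p : ℕ)) :
    newRow i w k p
      = (w ⟨(p : ℕ) - 1, by have := p.isLt; omega⟩ : {x : Fin m // x ≠ i}) := by
  have h1 : ¬ ((p : ℕ) = (k : ℕ)) := by omega
  have h2 : ¬ ((p : ℕ) < (k : ℕ)) := by omega
  simp [newRow, h1, h2]

lemma exists_iff (a b : Fin m) (ha : a ≠ i) (hb : b ≠ i) :
    (∃ p q : Fin m, p < q ∧ newRow i w k p = a ∧ newRow i w k q = b) ↔
    (∃ p q : Fin (m - 1), p < q ∧ ((w p : {x : Fin m // x ≠ i}) : Fin m) = a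
      ∧ ((w q : {x : Fin m // x ≠ i}) : Fin m) = b) := by
  constructor
  · rintro ⟨p, q, hpq, hpa, hqb⟩
    have hpq' : (p : ℕ) < (q : ℕ) := hpq
    have hpk : (p : ℕ) ≠ (k : ℕ) := fun h => ha ((newRow_self i w k p h ▸ hpa).symm ▸ rfl)
    have hqk : (q : ℕ) ≠ (k : ℕ) := fun h => hb ((newRow_self i w k q h ▸ hqb).symm ▸ rfl)
    rcases lt_or_gt_of_ne hpk with hp | hp <;> rcases lt_or_gt_of_ne hqk with hq | hq
    · exact ⟨⟨p, by have := k.isLt; omega⟩, ⟨q, by have := k.isLt; omega⟩,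
        by simp only [Fin.mk_lt_mk]; omega,
        by rw [newRow_lt i w k p hp] at hpa; exact hpa,
        by rw [newRow_lt i w k q hq] at hqb; exact hqb⟩
    · refine ⟨⟨p, by have := k.isLt; omega⟩, ⟨(q : ℕ) - 1, by have := q.isLt; omega⟩,
        by simp only [Fin.mk_lt_mk]; omega, ?_, ?_⟩
      · rw [newRow_lt i w k p hp] at hpa; exact hpa
      · rw [newRow_gt i w k q hq] at hqb; exact hqb
    · exfalso; omega
    · refine ⟨⟨(p : ℕ) - 1, by have := p.isLt; omega⟩, ⟨(q : ℕ) - 1, by have := q.isLt; omega⟩,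
        by simp only [Fin.mk_lt_mk]; omega, ?_, ?_⟩
      · rw [newRow_gt i w k p hp] at hpa; exact hpa
      · rw [newRow_gt i w k q hq] at hqb; exact hqb
  · rintro ⟨p, q, hpq, hpa, hqb⟩
    have hpm := p.isLt; have hqm := q.isLt
    have hpq' : (p : ℕ) < (q : ℕ) := hpq
    by_cases hpk : (p : ℕ) < (k : ℕ)
    · by_cases hqk : (q : ℕ) < (k : ℕ)
      · refine ⟨⟨p, by omega⟩, ⟨q, by omega⟩, by simp only [Fin.mk_lt_mk]; omega, ?_, ?_⟩
        · rw [newRow_lt i w k _ hpk]; exact hpa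
        · rw [newRow_lt i w k _ hqk]; exact hqb
      · refine ⟨⟨p, by omega⟩, ⟨(q : ℕ) + 1, by omega⟩,
          by simp only [Fin.mk_lt_mk]; omega, ?_, ?_⟩
        · rw [newRow_lt i w k _ hpk]; exact hpa
        · rw [newRow_gt i w k _ (show (k : ℕ) < (q : ℕ) + 1 by omega)]; exact hqb
    · refine ⟨⟨(p : ℕ) + 1, by omega⟩, ⟨(q : ℕ) + 1, by omega⟩,
        by simp only [Fin.mk_lt_mk]; omega, ?_, ?_⟩
      · rw [newRow_gt i w k _ (show (k : ℕ) < (p : ℕ) + 1 by omega)]; exact hpa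
      · rw [newRow_gt i w k _ (show (k : ℕ) < (q : ℕ) + 1 by omega)]; exact hqb

end aux

section aux2
variable {m : ℕ} (i : Fin m) (w : Fin (m - 1) ≃ {x : Fin m // x ≠ i}) (k : Fin m)

lemma exists_i_iff (b : Fin m) (hb : b ≠ i) :
    (∃ p q : Fin m, p < q ∧ newRow i w k p = i ∧ newRow i w k q = b) ↔
    (k : ℕ) ≤ ((w.symm ⟨b, hb⟩ : Fin (m - 1)) : ℕ) := by
  set pb : Fin (m - 1) := w.symm ⟨b, hb⟩ with hpbdef
  have hwpb : w pb = ⟨b, hb⟩ := w.apply_symm_apply _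
  constructor
  · rintro ⟨p, q, hpq, hpi, hqb⟩
    have hpq' : (p : ℕ) < (q : ℕ) := hpq
    have hpk : (p : ℕ) = (k : ℕ) := by
      by_contra h
      rcases lt_or_gt_of_ne h with h | h
      · rw [newRow_lt i w k p h] at hpi; exact (w _).2 hpi
      · rw [newRow_gt i w k p h] at hpi; exact (w _).2 hpi
    have hqk : (k : ℕ) < (q : ℕ) := by omega
    rw [newRow_gt i w k q hqk] at hqb
    have : w ⟨(q : ℕ) - 1, by have := q.isLt; omega⟩ = ⟨b, hb⟩ := Subtype.ext hqb
    have h2 : (⟨(q : ℕ) - 1, by have := q.isLt; omega⟩ : Fin (m - 1)) = pb := by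
      rw [hpbdef, ← this, Equiv.symm_apply_apply]
    have : (q : ℕ) - 1 = (pb : ℕ) := congrArg Fin.val h2
    omega
  · intro h
    have hpb := pb.isLt
    refine ⟨k, ⟨(pb : ℕ) + 1, by omega⟩, by simp only [Fin.lt_def, Fin.val_mk]; omega,
      newRow_self i w k k rfl, ?_⟩
    rw [newRow_gt i w k _ (show (k : ℕ) < (pb : ℕ) + 1 by omega)]
    have : (⟨(pb : ℕ) + 1 - 1, by omega⟩ : Fin (m - 1)) = pb := by
      apply Fin.ext; simp
    rw [this, hwpb]

lemma ifac_i (b : Fin m) (hb : b ≠ i) :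
    ifacF (newRow i w k) i b
      = if (k : ℕ) ≤ ((w.symm ⟨b, hb⟩ : Fin (m - 1)) : ℕ) then 1 else -1 := by
  rw [ifacF, if_congr (exists_i_iff i w k b hb) rfl rfl]

lemma sum_ifac_i (hm : 2 ≤ m) (b : Fin m) (hb : b ≠ i) :
    ∑ k : Fin m, ifacF (newRow i w k) i b
      = 2 * ((w.symm ⟨b, hb⟩ : Fin (m - 1)) : ℕ) + 2 - m := by
  set pb : ℕ := ((w.symm ⟨b, hb⟩ : Fin (m - 1)) : ℕ) with hpbdef
  have hpb : pb < m - 1 := (w.symm ⟨b, hb⟩).isLt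
  have h1 : ∀ k : Fin m, ifacF (newRow i w k) i b = if (k : ℕ) ≤ pb then 1 else -1 :=
    fun k => ifac_i i w k b hb
  rw [Finset.sum_congr rfl fun k _ => h1 k, Fin.sum_univ_eq_sum_range (fun k => if k ≤ pb then (1:ℝ) else -1)]
  rw [← Finset.sum_range_add_sum_Ico _ (show pb + 1 ≤ m by omega)]
  rw [Finset.sum_congr rfl (fun x hx => if_pos (by simp at hx; omega)),
    Finset.sum_congr rfl (fun x hx => if_neg (by simp [Finset.mem_Ico] at hx; omega))]
  rw [Finset.sum_const, Finset.sum_const, Nat.card_Ico]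
  have : ((m - (pb + 1) : ℕ) : ℝ) = (m : ℝ) - pb - 1 := by
    push_cast [Nat.cast_sub (by omega : pb + 1 ≤ m)]; ring
  simp [this]
  ring

end aux2

lemma map_fst_prod {α β γ : Type*} (s : Multiset α) (t : Multiset β) (g : α → γ) :
    (s ×ˢ t).map (fun p => g p.1) = Multiset.card t • s.map g := by
  induction s using Multiset.induction_on with
  | empty => simp
  | cons a s ih =>
    rw [Multiset.cons_product, Multiset.map_add, Multiset.map_map, Multiset.map_cons,
      Multiset.nsmul_cons, ← ih, Multiset.nsmul_singleton]
    simp [Function.comp]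

/-- stacking the `m` insertions of component `i` into every row of
`D` yields a design with `n·m` rows in which (a) for every pair `a, b ≠ i` the
distribution of `I_{ab}` equals its distribution over `D` (each value repeated
`m` times), and (b) for every `b ≠ i`, if the positions of `b` in `D` split
symmetrically (average position `(m-2)/2`), the column sum of the factors
`I_{ib}` over the new design is zero. -/
theorem stmt18 (m n : ℕ) (hm : 2 ≤ m) (i : Fin m)
    (D : Fin n → (Fin (m - 1) ≃ {x : Fin m // x ≠ i})) :
    (∀ a b : Fin m, a ≠ i → b ≠ i → a ≠ b →
      (Finset.univ.val.map fun rk : Fin n × Fin m =>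
          ifacF (newRow i (D rk.1) rk.2) a b)
        = m • (Finset.univ.val.map fun r : Fin n =>
            ifacF (fun p => ((D r p : {x : Fin m // x ≠ i}) : Fin m)) a b)) ∧
    (∀ (b : Fin m) (hb : b ≠ i),
      (∑ r : Fin n, (2 * (((D r).symm ⟨b, hb⟩ : Fin (m - 1)) : ℕ) : ℤ))
          = n * ((m : ℤ) - 2) →
      ∑ r : Fin n, ∑ k : Fin m, ifacF (newRow i (D r) k) i b = 0) := by
  constructor
  · intro a b ha hb hab
    have hfun : ∀ rk : Fin n × Fin m,
        ifacF (newRow i (D rk.1) rk.2) a b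
          = ifacF (fun p => ((D rk.1 p : {x : Fin m // x ≠ i}) : Fin m)) a b := by
      intro rk
      rw [ifacF, ifacF, if_congr (exists_iff i (D rk.1) rk.2 a b ha hb) rfl rfl]
    calc (Finset.univ.val.map fun rk : Fin n × Fin m =>
            ifacF (newRow i (D rk.1) rk.2) a b)
        = ((Finset.univ ×ˢ Finset.univ : Finset (Fin n × Fin m)).val.map
            fun rk => ifacF (fun p => ((D rk.1 p : {x : Fin m // x ≠ i}) : Fin m)) a b) := by
          rw [Finset.univ_product_univ]
          exact Multiset.map_congr rfl fun rk _ => hfun rk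
      _ = m • (Finset.univ.val.map fun r : Fin n =>
            ifacF (fun p => ((D r p : {x : Fin m // x ≠ i}) : Fin m)) a b) := by
          rw [Finset.product_val, map_fst_prod Finset.univ.val Finset.univ.val
            (fun r : Fin n => ifacF (fun p => ((D r p : {x : Fin m // x ≠ i}) : Fin m)) a b)]
          congr 1
          simp [Finset.card_univ]
  · intro b hb hsum
    have h1 : ∀ r : Fin n, ∑ k : Fin m, ifacF (newRow i (D r) k) i b
        = 2 * (((D r).symm ⟨b, hb⟩ : Fin (m - 1)) : ℕ) + 2 - m :=
      fun r => sum_ifac_i i (D r) hm b hb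
    rw [Finset.sum_congr rfl fun r _ => h1 r]
    have hcast : (∑ r : Fin n, (2 * ((((D r).symm ⟨b, hb⟩ : Fin (m - 1)) : ℕ) : ℝ)))
        = n * ((m : ℝ) - 2) := by
      exact_mod_cast congrArg (Int.cast : ℤ → ℝ) hsum
    rw [Finset.sum_sub_distrib, Finset.sum_add_distrib]
    simp only [Finset.sum_const, Finset.card_univ, Fintype.card_fin, nsmul_eq_mul]
    rw [hcast]
    ring
end
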